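/- arXiv:2002.09516 — 9 statements merged into one kernel-verified Lean document; each statement's English description precedes it below -/
import Mathlib

section
/- Fix d, N, H ∈ ℕ with d ≥ 1, a regularization parameter λ > 0, and data φ_1,…,φ_N ∈ ℝ^d, r'_1,…,r'_N ∈ ℝ, ψ_1,…,ψ_N ∈ ℝ^d. Define the fitted Q-iteration (FQI) weights by ŵ_{H+1} := 0 and, for h = H, H−1, …, 0, ŵ_h := the unique global minimizer over w ∈ ℝ^d of the ridge objective w ↦ Σ_{n=1}^N (φ_nᵀw − r'_n − ψ_nᵀŵ_{h+1})² + λ‖w‖_2². Define the model-based (plug-in) weights by w̄_{H+1} := 0 and w̄_h := R̂ + M̂ w̄_{h+1} for h = H, …, 0. Then ŵ_h = w̄_h for every h = 0, 1, …, H+1; in particular, for every ν_0 ∈ ℝ^d the FQI value estimate ν_0ᵀŵ_0 equals the plug-in value estimate ν_0ᵀw̄_0. -/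
open Matrix Finset

/-!
The ridge objective is a quadratic in `w` whose Hessian is the Gram matrix
`Σ̂ = λ I + Σ φ_n φ_nᵀ`; completing the square around `Σ̂⁻¹ Σ y_n φ_n` shows that this point is
its only minimizer. At step `h` the regression targets are `r'_n + ψ_nᵀ ŵ_{h+1}`, so FQI computes
`ŵ_h = Σ̂⁻¹ Σ (r'_n + ψ_nᵀ ŵ_{h+1}) φ_n`, and `R̂ + M̂ v` is the same affine map evaluated at `v`.
Both sequences thus obey one backward recursion from the common terminal value `0`.
-/

section Ridge

variable {𝕜 ι n : Type*} [Field 𝕜] [Fintype ι] [Fintype n]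

theorem sum_vecMulVec_mulVec (φ ψ : ι → n → 𝕜) (v : n → 𝕜) :
    (∑ i, vecMulVec (φ i) (ψ i)) *ᵥ v = ∑ i, (ψ i ⬝ᵥ v) • φ i := by
  simp only [sum_mulVec, vecMulVec_mulVec, op_smul_eq_smul]

variable [DecidableEq n]

def ridgeGram (lam : 𝕜) (φ : ι → n → 𝕜) : Matrix n n 𝕜 :=
  lam • 1 + ∑ i, vecMulVec (φ i) (φ i)

def ridgeObjective (lam : 𝕜) (φ : ι → n → 𝕜) (y : ι → 𝕜) (w : n → 𝕜) : 𝕜 :=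
  ∑ i, (φ i ⬝ᵥ w - y i) ^ 2 + lam * (w ⬝ᵥ w)

theorem dotProduct_ridgeGram_mulVec (lam : 𝕜) (φ : ι → n → 𝕜) (u v : n → 𝕜) :
    u ⬝ᵥ (ridgeGram lam φ *ᵥ v) = lam * (u ⬝ᵥ v) + ∑ i, (φ i ⬝ᵥ u) * (φ i ⬝ᵥ v) := by
  rw [dotProduct_comm, ridgeGram, add_mulVec, smul_mulVec, one_mulVec, sum_vecMulVec_mulVec,
    add_dotProduct, smul_dotProduct, smul_eq_mul, dotProduct_comm v, sum_dotProduct]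
  simp only [smul_dotProduct, smul_eq_mul, mul_comm]

theorem ridgeObjective_eq_add (lam : 𝕜) (φ : ι → n → 𝕜) {y : ι → 𝕜} {w₀ : n → 𝕜}
    (hw₀ : ridgeGram lam φ *ᵥ w₀ = ∑ i, y i • φ i) (u : n → 𝕜) :
    ridgeObjective lam φ y u =
      ridgeObjective lam φ y w₀ + (u - w₀) ⬝ᵥ (ridgeGram lam φ *ᵥ (u - w₀)) := by
  have hcross : ∀ v, v ⬝ᵥ (ridgeGram lam φ *ᵥ w₀) = ∑ i, y i * (φ i ⬝ᵥ v) := fun v => by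
    simp only [dotProduct_comm v, hw₀, sum_dotProduct, smul_dotProduct, smul_eq_mul]
  have hu := hcross u
  have hw := hcross w₀
  rw [dotProduct_ridgeGram_mulVec] at hu hw
  have key : ∑ i, (φ i ⬝ᵥ u - y i) ^ 2 = ∑ i, (φ i ⬝ᵥ w₀ - y i) ^ 2
      + ∑ i, (φ i ⬝ᵥ u - φ i ⬝ᵥ w₀) * (φ i ⬝ᵥ u - φ i ⬝ᵥ w₀)
      + 2 * (∑ i, (φ i ⬝ᵥ u) * (φ i ⬝ᵥ w₀) - ∑ i, y i * (φ i ⬝ᵥ u))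
      - 2 * (∑ i, (φ i ⬝ᵥ w₀) * (φ i ⬝ᵥ w₀) - ∑ i, y i * (φ i ⬝ᵥ w₀)) := by
    simp only [Finset.mul_sum, ← Finset.sum_sub_distrib, ← Finset.sum_add_distrib]
    exact Finset.sum_congr rfl fun i _ => by ring
  simp only [ridgeObjective, dotProduct_ridgeGram_mulVec, sub_dotProduct, dotProduct_sub,
    dotProduct_comm w₀ u]
  linear_combination key + 2 * hu - 2 * hw

variable [LinearOrder 𝕜] [IsStrictOrderedRing 𝕜] {lam : 𝕜}

theorem dotProduct_ridgeGram_mulVec_self_pos (hlam : 0 < lam) (φ : ι → n → 𝕜) {x : n → 𝕜}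
    (hx : x ≠ 0) : 0 < x ⬝ᵥ (ridgeGram lam φ *ᵥ x) := by
  rw [dotProduct_ridgeGram_mulVec]
  have hxx : 0 < x ⬝ᵥ x :=
    lt_of_le_of_ne (Finset.sum_nonneg fun i _ => mul_self_nonneg (x i))
      (Ne.symm (dotProduct_self_eq_zero.not.mpr hx))
  have hsum : 0 ≤ ∑ i, (φ i ⬝ᵥ x) * (φ i ⬝ᵥ x) :=
    Finset.sum_nonneg fun i _ => mul_self_nonneg _
  positivity

theorem ridgeGram_mulVec_inv_mulVec (hlam : 0 < lam) (φ : ι → n → 𝕜) (b : n → 𝕜) :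
    ridgeGram lam φ *ᵥ ((ridgeGram lam φ)⁻¹ *ᵥ b) = b := by
  have hinj : Function.Injective (ridgeGram lam φ).mulVec := by
    intro x y hxy
    by_contra hne
    have hpos := dotProduct_ridgeGram_mulVec_self_pos hlam φ (sub_ne_zero.mpr hne)
    rw [mulVec_sub, hxy, sub_self, dotProduct_zero] at hpos
    exact hpos.false
  have hdet := (isUnit_iff_isUnit_det _).mp (mulVec_injective_iff_isUnit.mp hinj)
  rw [mulVec_mulVec, mul_nonsing_inv _ hdet, one_mulVec]

theorem eq_ridgeSolution_of_forall_le (hlam : 0 < lam) (φ : ι → n → 𝕜) {y : ι → 𝕜}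
    {w : n → 𝕜} (hmin : ∀ u, ridgeObjective lam φ y w ≤ ridgeObjective lam φ y u) :
    w = (ridgeGram lam φ)⁻¹ *ᵥ ∑ i, y i • φ i := by
  set w₀ := (ridgeGram lam φ)⁻¹ *ᵥ ∑ i, y i • φ i
  have hsplit :=
    ridgeObjective_eq_add lam φ (ridgeGram_mulVec_inv_mulVec hlam φ (∑ i, y i • φ i)) w
  by_contra hne
  have hpos := dotProduct_ridgeGram_mulVec_self_pos hlam φ (sub_ne_zero.mpr hne)
  linarith [hmin w₀]

end Ridge

theorem eq_of_backward_recurrence {α : Type*} (T : α → α) {f g : ℕ → α} {H : ℕ}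
    (htop : f (H + 1) = g (H + 1)) (hf : ∀ h ≤ H, f h = T (f (h + 1)))
    (hg : ∀ h ≤ H, g h = T (g (h + 1))) : ∀ h ≤ H + 1, f h = g h := by
  intro h hh
  induction hh using Nat.decreasingInduction with
  | self => exact htop
  | of_succ k hk ih => rw [hf k (by omega), hg k (by omega), ih]

theorem fqi_eq_plug_in_general (d N H : ℕ) (lam : ℝ) (hlam : 0 < lam)
    (φ : Fin N → Fin d → ℝ) (r' : Fin N → ℝ) (ψ : Fin N → Fin d → ℝ)
    (Shat : Matrix (Fin d) (Fin d) ℝ)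
    (hShat : Shat = lam • (1 : Matrix (Fin d) (Fin d) ℝ) + ∑ n, vecMulVec (φ n) (φ n))
    (Rhat : Fin d → ℝ) (hRhat : Rhat = Shat⁻¹ *ᵥ ∑ n, r' n • φ n)
    (Mhat : Matrix (Fin d) (Fin d) ℝ)
    (hMhat : Mhat = Shat⁻¹ * ∑ n, vecMulVec (φ n) (ψ n))
    (what wbar : ℕ → Fin d → ℝ)
    (hwhat_top : what (H + 1) = 0)
    -- `what h` is the (unique) global minimizer of the ridge objective at step `h`
    (hwhat_min : ∀ h ≤ H, ∀ w : Fin d → ℝ,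
      (∑ n, (φ n ⬝ᵥ what h - r' n - ψ n ⬝ᵥ what (h + 1)) ^ 2) + lam * (what h ⬝ᵥ what h)
        ≤ (∑ n, (φ n ⬝ᵥ w - r' n - ψ n ⬝ᵥ what (h + 1)) ^ 2) + lam * (w ⬝ᵥ w))
    (hwbar_top : wbar (H + 1) = 0)
    (hwbar : ∀ h ≤ H, wbar h = Rhat + Mhat *ᵥ wbar (h + 1)) :
    (∀ h ≤ H + 1, what h = wbar h) ∧
      ∀ ν0 : Fin d → ℝ, ν0 ⬝ᵥ what 0 = ν0 ⬝ᵥ wbar 0 := by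
  subst hShat hRhat hMhat
  let fqiStep (v : Fin d → ℝ) : Fin d → ℝ :=
    (ridgeGram lam φ)⁻¹ *ᵥ ∑ n, (r' n + ψ n ⬝ᵥ v) • φ n
  have hfqi : ∀ h ≤ H, what h = fqiStep (what (h + 1)) := fun h hh =>
    eq_ridgeSolution_of_forall_le hlam φ fun u => by
      simpa only [ridgeObjective, sub_sub] using hwhat_min h hh u
  have hplug : ∀ h ≤ H, wbar h = fqiStep (wbar (h + 1)) := fun h hh => by
    rw [hwbar h hh, ← mulVec_mulVec, sum_vecMulVec_mulVec, ← mulVec_add, ← Finset.sum_add_distrib]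
    simp only [fqiStep, ridgeGram, add_smul]
  have hagree := eq_of_backward_recurrence fqiStep (hwhat_top.trans hwbar_top.symm) hfqi hplug
  exact ⟨hagree, fun ν0 => by rw [hagree 0 (Nat.zero_le _)]⟩

/-- **Equivalence between fitted Q-iteration and the model-based plug-in estimator.**
The FQI weights, defined step-by-step as the unique global minimizers of the ridge
regression objectives, coincide with the plug-in weights `w̄_h = R̂ + M̂ w̄_{h+1}`;
in particular the two value estimates agree. -/
theorem fqi_eq_plug_in (d N H : ℕ) (hd : 1 ≤ d) (lam : ℝ) (hlam : 0 < lam)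
    (φ : Fin N → Fin d → ℝ) (r' : Fin N → ℝ) (ψ : Fin N → Fin d → ℝ)
    (Shat : Matrix (Fin d) (Fin d) ℝ)
    (hShat : Shat = lam • (1 : Matrix (Fin d) (Fin d) ℝ) + ∑ n, vecMulVec (φ n) (φ n))
    (Rhat : Fin d → ℝ) (hRhat : Rhat = Shat⁻¹ *ᵥ ∑ n, r' n • φ n)
    (Mhat : Matrix (Fin d) (Fin d) ℝ)
    (hMhat : Mhat = Shat⁻¹ * ∑ n, vecMulVec (φ n) (ψ n))
    (what wbar : ℕ → Fin d → ℝ)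
    (hwhat_top : what (H + 1) = 0)
    -- `what h` is the (unique) global minimizer of the ridge objective at step `h`
    (hwhat_min : ∀ h ≤ H, ∀ w : Fin d → ℝ,
      (∑ n, (φ n ⬝ᵥ what h - r' n - ψ n ⬝ᵥ what (h + 1)) ^ 2) + lam * (what h ⬝ᵥ what h)
        ≤ (∑ n, (φ n ⬝ᵥ w - r' n - ψ n ⬝ᵥ what (h + 1)) ^ 2) + lam * (w ⬝ᵥ w))
    (hwbar_top : wbar (H + 1) = 0)
    (hwbar : ∀ h ≤ H, wbar h = Rhat + Mhat *ᵥ wbar (h + 1)) :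
    (∀ h ≤ H + 1, what h = wbar h) ∧
      ∀ ν0 : Fin d → ℝ, ν0 ⬝ᵥ what 0 = ν0 ⬝ᵥ wbar 0 :=
  fqi_eq_plug_in_general d N H lam hlam φ r' ψ Shat hShat Rhat hRhat Mhat hMhat what wbar hwhat_top
    hwhat_min hwbar_top hwbar
end

section
/- Let γ ∈ (0,1), N ∈ ℕ with N ≥ 1, Σ̂ ∈ ℝ^{d×d} be symmetric positive definite, M̂ ∈ ℝ^{d×d} be such that I_d − γM̂ is invertible, and ν_0 ∈ ℝ^d. Define J : ℝ^d × ℝ^d → ℝ by J(x, y) := −(1/(2N)) yᵀΣ̂y + (1/N) xᵀ(I_d − γM̂)ᵀΣ̂y − ν_0ᵀx. Set x* := N(I_d − γM̂)^{-1}Σ̂^{-1}((I_d − γM̂)ᵀ)^{-1}ν_0 and y* := NΣ̂^{-1}((I_d − γM̂)ᵀ)^{-1}ν_0. Then (x*, y*) is a saddle point of J: for all x, y ∈ ℝ^d, J(x*, y) ≤ J(x*, y*) ≤ J(x, y*). Moreover, for any data φ_1,…,φ_N ∈ ℝ^d and r'_1,…,r'_N ∈ ℝ with Σ̂ = Σ_{n=1}^N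 φ_nφ_nᵀ, the DualDICE value estimate (1/N) Σ_{n=1}^N (y*ᵀφ_n) r'_n equals ν_0ᵀ(I_d − γM̂)^{-1}R̂, where R̂ := Σ̂^{-1} Σ_{n=1}^N r'_nφ_n. -/
/-!
With `A = I - γM̂` and `B = AᵀΣ̂`, the closed forms say exactly that `A x* = y*` and
`B y* = N ν₀`. The first turns `J(x*, ·)` into a concave quadratic centred at `y*`; the second
cancels the `x`-dependence of `J(·, y*)`. The value identity is the adjoint relation
`⟨B⁻¹ν₀, w⟩ = ⟨ν₀, A⁻¹Σ̂⁻¹w⟩`, which holds since `Σ̂` is symmetric.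
-/

open Matrix

namespace Matrix

variable {n : Type*} [Fintype n]

theorem IsSymm.dotProduct_mulVec_comm {α : Type*} [CommSemiring α] {S : Matrix n n α}
    (hS : S.IsSymm) (u v : n → α) : u ⬝ᵥ S *ᵥ v = v ⬝ᵥ S *ᵥ u := by
  rw [dotProduct_mulVec, ← mulVec_transpose, hS.eq, dotProduct_comm]

theorem PosSemidef.two_mul_dotProduct_mulVec_le {S : Matrix n n ℝ} (hS : S.PosSemidef)
    (u v : n → ℝ) : 2 * (u ⬝ᵥ S *ᵥ v) ≤ u ⬝ᵥ S *ᵥ u + v ⬝ᵥ S *ᵥ v := by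
  have hsymm : S.IsSymm := isHermitian_iff_isSymm.mp hS.isHermitian
  have h := hS.dotProduct_mulVec_nonneg (u - v)
  simp only [star_trivial, mulVec_sub, dotProduct_sub, sub_dotProduct,
    hsymm.dotProduct_mulVec_comm v u] at h
  linarith

theorem dotProduct_transpose_mul_mulVec {α : Type*} [CommSemiring α] (A S : Matrix n n α)
    (x y : n → α) : x ⬝ᵥ (Aᵀ * S) *ᵥ y = (A *ᵥ x) ⬝ᵥ S *ᵥ y := by
  rw [← mulVec_mulVec, dotProduct_mulVec, vecMul_transpose]

theorem dotProduct_sum_smul {α ι : Type*} [CommSemiring α] (s : Finset ι) (y : n → α)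
    (r : ι → α) (φ : ι → n → α) : y ⬝ᵥ ∑ i ∈ s, r i • φ i = ∑ i ∈ s, (y ⬝ᵥ φ i) * r i := by
  simp only [dotProduct_sum, dotProduct_smul, smul_eq_mul, mul_comm]

end Matrix

section DualDICE

variable {n : Type*} [Fintype n] (S A : Matrix n n ℝ) (ν0 : n → ℝ) (N : ℝ)

/-- `S` plays the role of `Σ̂` and `A` that of `I - γM̂`. -/
noncomputable def dualDiceObjective (x y : n → ℝ) : ℝ :=
  -(1 / (2 * N)) * (y ⬝ᵥ S *ᵥ y) + (1 / N) * (x ⬝ᵥ (Aᵀ * S) *ᵥ y) - ν0 ⬝ᵥ x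

variable {S A ν0 N}

theorem dualDiceObjective_le_of_mulVec_eq (hS : S.PosSemidef) (hN : 0 < N) {xs ys : n → ℝ}
    (h : A *ᵥ xs = ys) (y : n → ℝ) :
    dualDiceObjective S A ν0 N xs y ≤ dualDiceObjective S A ν0 N xs ys := by
  have hgap : 0 ≤ (ys ⬝ᵥ S *ᵥ ys - 2 * (ys ⬝ᵥ S *ᵥ y) + y ⬝ᵥ S *ᵥ y) / (2 * N) :=
    div_nonneg (by linarith [hS.two_mul_dotProduct_mulVec_le ys y]) (by positivity)
  rw [← sub_nonneg]
  convert hgap using 1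
  simp only [dualDiceObjective, dotProduct_transpose_mul_mulVec, h]
  ring

theorem dualDiceObjective_eq_of_mulVec_eq (hN : N ≠ 0) {ys : n → ℝ}
    (h : (Aᵀ * S) *ᵥ ys = N • ν0) (x : n → ℝ) :
    dualDiceObjective S A ν0 N x ys = -(1 / (2 * N)) * (ys ⬝ᵥ S *ᵥ ys) := by
  rw [dualDiceObjective, h, dotProduct_smul, smul_eq_mul, dotProduct_comm x, ← mul_assoc,
    one_div_mul_cancel hN, one_mul, add_sub_cancel_right]

theorem dualDiceObjective_saddle (hS : S.PosSemidef) (hN : 0 < N) {xs ys : n → ℝ}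
    (hx : A *ᵥ xs = ys) (hy : (Aᵀ * S) *ᵥ ys = N • ν0) (x y : n → ℝ) :
    dualDiceObjective S A ν0 N xs y ≤ dualDiceObjective S A ν0 N xs ys ∧
      dualDiceObjective S A ν0 N xs ys ≤ dualDiceObjective S A ν0 N x ys :=
  ⟨dualDiceObjective_le_of_mulVec_eq hS hN hx y,
    (dualDiceObjective_eq_of_mulVec_eq hN.ne' hy xs).trans
      (dualDiceObjective_eq_of_mulVec_eq hN.ne' hy x).symm |>.le⟩

theorem dualDice_estimate_eq_plugIn [DecidableEq n] {ι : Type*} [Fintype ι] (hS : S.IsSymm)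
    (hN : N ≠ 0) (φ : ι → n → ℝ) (r : ι → ℝ) :
    (1 / N) * ∑ i, ((N • (S⁻¹ * Aᵀ⁻¹) *ᵥ ν0) ⬝ᵥ φ i) * r i
      = ν0 ⬝ᵥ A⁻¹ *ᵥ (S⁻¹ *ᵥ ∑ i, r i • φ i) := by
  have hadjoint : (S⁻¹ * Aᵀ⁻¹)ᵀ = A⁻¹ * S⁻¹ := by
    rw [transpose_mul, transpose_nonsing_inv, transpose_nonsing_inv, transpose_transpose, hS.eq]
  rw [← dotProduct_sum_smul, smul_dotProduct, smul_eq_mul, ← mul_assoc, one_div_mul_cancel hN,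
    one_mul, mulVec_mulVec, ← hadjoint, dotProduct_mulVec, vecMul_transpose]

end DualDICE

theorem dualdice_saddle_and_equivalence_general (d N : ℕ) (γ : ℝ)
    (hN : 1 ≤ N)
    (Shat : Matrix (Fin d) (Fin d) ℝ) (hShat : Shat.PosDef)
    (Mhat : Matrix (Fin d) (Fin d) ℝ)
    (hMhat : IsUnit ((1 : Matrix (Fin d) (Fin d) ℝ) - γ • Mhat))
    (ν0 : Fin d → ℝ)
    (J : (Fin d → ℝ) → (Fin d → ℝ) → ℝ)
    (hJ : ∀ x y, J x y = -(1 / (2 * N)) * (y ⬝ᵥ Shat *ᵥ y)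
        + (1 / N) * (x ⬝ᵥ (((1 : Matrix (Fin d) (Fin d) ℝ) - γ • Mhat)ᵀ * Shat) *ᵥ y)
        - ν0 ⬝ᵥ x)
    (xstar ystar : Fin d → ℝ)
    (hx : xstar = (N : ℝ) •
      ((((1 : Matrix (Fin d) (Fin d) ℝ) - γ • Mhat)⁻¹ * Shat⁻¹ *
        (((1 : Matrix (Fin d) (Fin d) ℝ) - γ • Mhat)ᵀ)⁻¹) *ᵥ ν0))
    (hy : ystar = (N : ℝ) •
      ((Shat⁻¹ * (((1 : Matrix (Fin d) (Fin d) ℝ) - γ • Mhat)ᵀ)⁻¹) *ᵥ ν0)) :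
    (∀ x y : Fin d → ℝ, J xstar y ≤ J xstar ystar ∧ J xstar ystar ≤ J x ystar) ∧
    (∀ (φ : Fin N → Fin d → ℝ) (r' : Fin N → ℝ),
      Shat = ∑ n, vecMulVec (φ n) (φ n) →
      (1 / N) * ∑ n, (ystar ⬝ᵥ φ n) * r' n
        = ν0 ⬝ᵥ (((1 : Matrix (Fin d) (Fin d) ℝ) - γ • Mhat)⁻¹ *ᵥ
            (Shat⁻¹ *ᵥ ∑ n, r' n • φ n))) := by
  set A := (1 : Matrix (Fin d) (Fin d) ℝ) - γ • Mhat
  have hNpos : (0 : ℝ) < N := by exact_mod_cast hN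
  have hAdet : IsUnit A.det := (isUnit_iff_isUnit_det A).mp hMhat
  have hBdet : IsUnit (Aᵀ * Shat).det := by
    rw [det_mul, det_transpose]
    exact hAdet.mul hShat.det_pos.ne'.isUnit
  have hAx : A *ᵥ xstar = ystar := by
    rw [hx, hy, mulVec_smul, mulVec_mulVec, mul_assoc, mul_nonsing_inv_cancel_left _ _ hAdet]
  have hBy : (Aᵀ * Shat) *ᵥ ystar = (N : ℝ) • ν0 := by
    rw [hy, ← Matrix.mul_inv_rev, mulVec_smul, mulVec_mulVec, mul_nonsing_inv _ hBdet, one_mulVec]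
  obtain rfl : J = dualDiceObjective Shat A ν0 N := funext fun x => funext (hJ x)
  refine ⟨dualDiceObjective_saddle hShat.posSemidef hNpos hAx hBy, fun φ r' _ => ?_⟩
  rw [hy]
  exact dualDice_estimate_eq_plugIn (isHermitian_iff_isSymm.mp hShat.isHermitian) hNpos.ne' φ r'

/-- **Equivalence between DualDICE and the FQI/plug-in estimator** (discounted case,
linear function classes, `λ = 0`).  The pair `(x*, y*)` is a saddle point of the DualDICE
objective `J`, and the resulting DualDICE value estimate equals the plug-in estimate
`ν₀ᵀ(I − γM̂)⁻¹R̂`. -/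
theorem dualdice_saddle_and_equivalence (d N : ℕ) (γ : ℝ) (hγ : γ ∈ Set.Ioo (0 : ℝ) 1)
    (hN : 1 ≤ N)
    (Shat : Matrix (Fin d) (Fin d) ℝ) (hShat : Shat.PosDef)
    (Mhat : Matrix (Fin d) (Fin d) ℝ)
    (hMhat : IsUnit ((1 : Matrix (Fin d) (Fin d) ℝ) - γ • Mhat))
    (ν0 : Fin d → ℝ)
    (J : (Fin d → ℝ) → (Fin d → ℝ) → ℝ)
    (hJ : ∀ x y, J x y = -(1 / (2 * N)) * (y ⬝ᵥ Shat *ᵥ y)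
        + (1 / N) * (x ⬝ᵥ (((1 : Matrix (Fin d) (Fin d) ℝ) - γ • Mhat)ᵀ * Shat) *ᵥ y)
        - ν0 ⬝ᵥ x)
    (xstar ystar : Fin d → ℝ)
    (hx : xstar = (N : ℝ) •
      ((((1 : Matrix (Fin d) (Fin d) ℝ) - γ • Mhat)⁻¹ * Shat⁻¹ *
        (((1 : Matrix (Fin d) (Fin d) ℝ) - γ • Mhat)ᵀ)⁻¹) *ᵥ ν0))
    (hy : ystar = (N : ℝ) •
      ((Shat⁻¹ * (((1 : Matrix (Fin d) (Fin d) ℝ) - γ • Mhat)ᵀ)⁻¹) *ᵥ ν0)) :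
    (∀ x y : Fin d → ℝ, J xstar y ≤ J xstar ystar ∧ J xstar ystar ≤ J x ystar) ∧
    (∀ (φ : Fin N → Fin d → ℝ) (r' : Fin N → ℝ),
      Shat = ∑ n, vecMulVec (φ n) (φ n) →
      (1 / N) * ∑ n, (ystar ⬝ᵥ φ n) * r' n
        = ν0 ⬝ᵥ (((1 : Matrix (Fin d) (Fin d) ℝ) - γ • Mhat)⁻¹ *ᵥ
            (Shat⁻¹ *ᵥ ∑ n, r' n • φ n))) :=
  dualdice_saddle_and_equivalence_general d N γ hN Shat hShat Mhat hMhat ν0 J hJ xstar ystar hx hy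
end

section
/- Fix d, N, H ∈ ℕ with d ≥ 1, λ > 0, data φ_1,…,φ_N ∈ ℝ^d, r'_1,…,r'_N ∈ ℝ, ψ_1,…,ψ_N ∈ ℝ^d, and a vector ν_0 ∈ ℝ^d. Let w_0, w_1, …, w_{H+1} ∈ ℝ^d be arbitrary vectors with w_{H+1} = 0. Define ŵ_{H+1} := 0 and ŵ_h := R̂ + M̂ŵ_{h+1} for h = H, …, 0, and define ν̂_h := (M̂ᵀ)^h ν_0 for h = 0, …, H. Then the following exact identity holds: ν_0ᵀw_0 − ν_0ᵀŵ_0 = Σ_{h=0}^{H} [ λ ν̂_hᵀΣ̂^{-1}w_h + Σ_{n=1}^{N} ν̂_hᵀΣ̂^{-1}φ_n (φ_nᵀw_h − r'_n − ψ_nᵀw_{h+1}) ]. -/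
/-!
Writing `ŵ_h - w_h = M̂ (ŵ_{h+1} - w_{h+1}) - (w_h - R̂ - M̂ w_{h+1})` and unrolling from `h = 0`
to `h = H + 1`, where both sequences vanish, telescopes the error into
`∑_h ((M̂ᵀ)^h ν₀)ᵀ (w_h - R̂ - M̂ w_{h+1})`. Since `Σ̂ w_h = λ w_h + ∑_n (φ_nᵀ w_h) φ_n` and `Σ̂` is
positive definite, each Bellman residual `w_h - R̂ - M̂ w_{h+1}` equals
`Σ̂⁻¹ (λ w_h + ∑_n (φ_nᵀ w_h - r'_n - ψ_nᵀ w_{h+1}) φ_n)`.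
-/

open Matrix Finset

theorem Matrix.dotProduct_sub_eq_sum_pow_transpose_mulVec {α ι : Type*} [CommRing α] [Fintype ι]
    [DecidableEq ι] (M : Matrix ι ι α) (b ν : ι → α) (w ŵ : ℕ → ι → α) (H : ℕ)
    (hŵ : ∀ h < H, ŵ h = b + M *ᵥ ŵ (h + 1)) :
    ν ⬝ᵥ (w 0 - ŵ 0)
      = ∑ h ∈ range H, ((Mᵀ) ^ h *ᵥ ν) ⬝ᵥ (w h - b - M *ᵥ w (h + 1))
        + ((Mᵀ) ^ H *ᵥ ν) ⬝ᵥ (w H - ŵ H) := by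
  induction H with
  | zero => simp
  | succ H ih =>
    have hstep : w H - ŵ H = (w H - b - M *ᵥ w (H + 1)) + M *ᵥ (w (H + 1) - ŵ (H + 1)) := by
      rw [hŵ H H.lt_succ_self, mulVec_sub]
      abel
    rw [ih fun h hh => hŵ h (hh.trans H.lt_succ_self), sum_range_succ, add_assoc, hstep,
      dotProduct_add, dotProduct_mulVec, ← mulVec_transpose, mulVec_mulVec, ← pow_succ']

open scoped ComplexOrder in
theorem Matrix.posDef_smul_one_add_sum_vecMulVec {𝕜 ι κ : Type*} [RCLike 𝕜] [Fintype ι]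
    [DecidableEq ι] [Fintype κ] {lam : 𝕜} (hlam : 0 < lam) (φ : κ → ι → 𝕜) :
    (lam • (1 : Matrix ι ι 𝕜) + ∑ n, vecMulVec (φ n) (star (φ n))).PosDef :=
  (PosDef.one.smul hlam).add_posSemidef
    (posSemidef_sum _ fun n _ => posSemidef_vecMulVec_self_star (φ n))

section BellmanResidual

variable {α ι κ : Type*} [CommRing α] [Fintype ι] [Fintype κ]

theorem bellman_residual_eq_inv_mulVec [DecidableEq ι] {lam : α} {φ ψ : κ → ι → α} (r : κ → α)
    {S : Matrix ι ι α} (hS : S = lam • 1 + ∑ n, vecMulVec (φ n) (φ n)) (hdet : IsUnit S.det)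
    (w w' : ι → α) :
    w - S⁻¹ *ᵥ ∑ n, r n • φ n - (S⁻¹ * ∑ n, vecMulVec (φ n) (ψ n)) *ᵥ w'
      = S⁻¹ *ᵥ (lam • w + ∑ n, (φ n ⬝ᵥ w - r n - ψ n ⬝ᵥ w') • φ n) := by
  have hSw : lam • w + ∑ n, (φ n ⬝ᵥ w - r n - ψ n ⬝ᵥ w') • φ n
      = S *ᵥ w - ∑ n, r n • φ n - (∑ n, vecMulVec (φ n) (ψ n)) *ᵥ w' := by
    simp only [hS, add_mulVec, smul_mulVec, one_mulVec, sum_mulVec, vecMulVec_mulVec,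
      op_smul_eq_smul, sub_smul, sum_sub_distrib]
    abel
  rw [hSw, mulVec_sub, mulVec_sub, mulVec_mulVec, nonsing_inv_mul _ hdet, one_mulVec,
    mulVec_mulVec]

theorem dotProduct_mulVec_smul_add_sum_smul (A : Matrix ι ι α) (lam : α) (φ : κ → ι → α)
    (c : κ → α) (ν w : ι → α) :
    ν ⬝ᵥ A *ᵥ (lam • w + ∑ n, c n • φ n)
      = lam * (ν ⬝ᵥ A *ᵥ w) + ∑ n, (ν ⬝ᵥ A *ᵥ φ n) * c n := by
  simp [mulVec_add, mulVec_smul, mulVec_sum, dotProduct_add, dotProduct_sum, mul_comm]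

end BellmanResidual

theorem fqi_error_decomposition_general (d N H : ℕ) (lam : ℝ) (hlam : 0 < lam)
    (φ : Fin N → Fin d → ℝ) (r' : Fin N → ℝ) (ψ : Fin N → Fin d → ℝ)
    (ν0 : Fin d → ℝ)
    (Shat : Matrix (Fin d) (Fin d) ℝ)
    (hShat : Shat = lam • (1 : Matrix (Fin d) (Fin d) ℝ) + ∑ n, vecMulVec (φ n) (φ n))
    (Rhat : Fin d → ℝ) (hRhat : Rhat = Shat⁻¹ *ᵥ ∑ n, r' n • φ n)
    (Mhat : Matrix (Fin d) (Fin d) ℝ)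
    (hMhat : Mhat = Shat⁻¹ * ∑ n, vecMulVec (φ n) (ψ n))
    (w : ℕ → Fin d → ℝ) (hw_top : w (H + 1) = 0)
    (what : ℕ → Fin d → ℝ) (hwhat_top : what (H + 1) = 0)
    (hwhat : ∀ h ≤ H, what h = Rhat + Mhat *ᵥ what (h + 1))
    (νhat : ℕ → Fin d → ℝ) (hνhat : ∀ h, νhat h = (Mhatᵀ) ^ h *ᵥ ν0) :
    ν0 ⬝ᵥ w 0 - ν0 ⬝ᵥ what 0
      = ∑ h ∈ Finset.range (H + 1),
          (lam * (νhat h ⬝ᵥ Shat⁻¹ *ᵥ w h)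
            + ∑ n, (νhat h ⬝ᵥ Shat⁻¹ *ᵥ φ n)
                * (φ n ⬝ᵥ w h - r' n - ψ n ⬝ᵥ w (h + 1))) := by
  have hdet : IsUnit Shat.det := by
    rw [← isUnit_iff_isUnit_det, hShat]
    simpa using (posDef_smul_one_add_sum_vecMulVec hlam φ).isUnit
  have htel := dotProduct_sub_eq_sum_pow_transpose_mulVec Mhat Rhat ν0 w what (H + 1)
    fun h hh => hwhat h (Nat.lt_succ_iff.mp hh)
  rw [hw_top, hwhat_top, sub_zero, dotProduct_zero, add_zero] at htel
  rw [← dotProduct_sub, htel]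
  refine sum_congr rfl fun h _ => ?_
  rw [hνhat, hRhat, hMhat, bellman_residual_eq_inv_mulVec r' hShat hdet,
    dotProduct_mulVec_smul_add_sum_smul]

/-- **Exact error decomposition of the FQI off-policy evaluation error** into a
regularization-bias term and a weighted sum of per-sample Bellman residuals. -/
theorem fqi_error_decomposition (d N H : ℕ) (hd : 1 ≤ d) (lam : ℝ) (hlam : 0 < lam)
    (φ : Fin N → Fin d → ℝ) (r' : Fin N → ℝ) (ψ : Fin N → Fin d → ℝ)
    (ν0 : Fin d → ℝ)
    (Shat : Matrix (Fin d) (Fin d) ℝ)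
    (hShat : Shat = lam • (1 : Matrix (Fin d) (Fin d) ℝ) + ∑ n, vecMulVec (φ n) (φ n))
    (Rhat : Fin d → ℝ) (hRhat : Rhat = Shat⁻¹ *ᵥ ∑ n, r' n • φ n)
    (Mhat : Matrix (Fin d) (Fin d) ℝ)
    (hMhat : Mhat = Shat⁻¹ * ∑ n, vecMulVec (φ n) (ψ n))
    (w : ℕ → Fin d → ℝ) (hw_top : w (H + 1) = 0)
    (what : ℕ → Fin d → ℝ) (hwhat_top : what (H + 1) = 0)
    (hwhat : ∀ h ≤ H, what h = Rhat + Mhat *ᵥ what (h + 1))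
    (νhat : ℕ → Fin d → ℝ) (hνhat : ∀ h, νhat h = (Mhatᵀ) ^ h *ᵥ ν0) :
    ν0 ⬝ᵥ w 0 - ν0 ⬝ᵥ what 0
      = ∑ h ∈ Finset.range (H + 1),
          (lam * (νhat h ⬝ᵥ Shat⁻¹ *ᵥ w h)
            + ∑ n, (νhat h ⬝ᵥ Shat⁻¹ *ᵥ φ n)
                * (φ n ⬝ᵥ w h - r' n - ψ n ⬝ᵥ w (h + 1))) :=
  fqi_error_decomposition_general d N H lam hlam φ r' ψ ν0 Shat hShat Rhat hRhat Mhat hMhat w hw_top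
    what hwhat_top hwhat νhat hνhat
end

section
/- Let V be a vector space over ℝ, let P and P̂ be linear endomorphisms of V, let r, r̂ ∈ V, and let H ∈ ℕ. Define Q_h := Σ_{j=0}^{H−h} P^j r for h = 0, 1, …, H, set Q_{H+1} := 0, and define Q̂_0 := Σ_{h=0}^{H} P̂^h r̂. Then Q_0 − Q̂_0 = Σ_{h=0}^{H} P̂^h ( Q_h − (r̂ + P̂ Q_{h+1}) ). -/
open Finset

theorem Module.End.sum_pow_apply_sub_apply_succ {R M : Type*} [Semiring R] [AddCommGroup M]
    [Module R M] (A : Module.End R M) (q : ℕ → M) (n : ℕ) :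
    ∑ h ∈ range n, (A ^ h) (q h - A (q (h + 1))) = q 0 - (A ^ n) (q n) := by
  have hterm : ∀ h, (A ^ h) (q h - A (q (h + 1))) = (A ^ h) (q h) - (A ^ (h + 1)) (q (h + 1)) :=
    fun h => by rw [map_sub, pow_succ, Module.End.mul_apply]
  simp only [hterm]
  exact sum_range_sub' (fun h => (A ^ h) (q h)) n

theorem q_error_telescoping_general {V : Type*} [AddCommGroup V] [Module ℝ V]
    (Phat : V →ₗ[ℝ] V) (rhat : V) (H : ℕ)
    (Q : ℕ → V)
    (hQtop : Q (H + 1) = 0)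
    (Qhat0 : V) (hQhat0 : Qhat0 = ∑ h ∈ Finset.range (H + 1), (Phat ^ h) rhat) :
    Q 0 - Qhat0
      = ∑ h ∈ Finset.range (H + 1), (Phat ^ h) (Q h - (rhat + Phat (Q (h + 1)))) := by
  have hsplit : ∀ h, (Phat ^ h) (Q h - (rhat + Phat (Q (h + 1))))
      = (Phat ^ h) (Q h - Phat (Q (h + 1))) - (Phat ^ h) rhat := fun h => by
    rw [← map_sub, sub_add_eq_sub_sub_swap]
  rw [sum_congr rfl fun h _ => hsplit h, sum_sub_distrib,
    Module.End.sum_pow_apply_sub_apply_succ, hQtop, map_zero, sub_zero, hQhat0]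

/-- **Decomposition of the Q-function estimation error into propagated one-step Bellman
errors.**  With `Q_h = Σ_{j=0}^{H−h} P^j r`, `Q_{H+1} = 0` and `Q̂₀ = Σ_{h=0}^H P̂^h r̂`,
one has `Q₀ − Q̂₀ = Σ_{h=0}^H P̂^h (Q_h − (r̂ + P̂ Q_{h+1}))`. -/
theorem q_error_telescoping {V : Type*} [AddCommGroup V] [Module ℝ V]
    (P Phat : V →ₗ[ℝ] V) (r rhat : V) (H : ℕ)
    (Q : ℕ → V)
    (hQ : ∀ h ≤ H, Q h = ∑ j ∈ Finset.range (H - h + 1), (P ^ j) r)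
    (hQtop : Q (H + 1) = 0)
    (Qhat0 : V) (hQhat0 : Qhat0 = ∑ h ∈ Finset.range (H + 1), (Phat ^ h) rhat) :
    Q 0 - Qhat0
      = ∑ h ∈ Finset.range (H + 1), (Phat ^ h) (Q h - (rhat + Phat (Q (h + 1)))) :=
  q_error_telescoping_general Phat rhat H Q hQtop Qhat0 hQhat0
end

section
/- Let d ∈ ℕ with d ≥ 1, H ∈ ℕ, N > 0 a real number, Σ and Σ^π symmetric positive definite d×d real matrices, Σ̂ an invertible d×d real matrix, M and M̂ d×d real matrices with ‖(Σ^π)^{1/2} M (Σ^π)^{-1/2}‖_2 ≤ 1, ν_0 ∈ ℝ^d, and vectors ΔW_0, …, ΔW_H ∈ ℝ^d. Define ΔX := NΣ̂^{-1} − Σ^{-1}, ΔM := M̂ − M, ν̂_h := (M̂ᵀ)^h ν_0, ν_h := (Mᵀ)^h ν_0, and E_2 := Σ_{h=0}^{H} ( N ν̂_hᵀΣ̂^{-1} − ν_hᵀΣ^{-1} ) ΔW_h. Then |E_2| ≤ Σ_{h=0}^{H} √(ν_0ᵀ(Σ^π)^{-1}ν_0) · ‖(Σ^π)^{1/2}Σ^{-1/2}‖_2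 · ‖Σ^{-1/2}ΔW_h‖_2 · ( (1 + ‖(Σ^π)^{1/2} ΔM (Σ^π)^{-1/2}‖_2)^h · (1 + ‖Σ^{1/2} (ΔX) Σ^{1/2}‖_2) − 1 ). -/
open Matrix Finset

/-- The spectral norm (ℓ²→ℓ² operator norm) of a real square matrix. -/
noncomputable def specNorm {d : ℕ} (A : Matrix (Fin d) (Fin d) ℝ) : ℝ :=
  ‖Matrix.toEuclideanCLM (𝕜 := ℝ) A‖

section
open scoped ComplexOrder
/-- The square root of a positive semidefinite matrix, as `Matrix.PosSemidef.sqrt` was defined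
in the older Mathlib (removed since). -/
noncomputable def Matrix.PosSemidef.sqrt {n 𝕜 : Type*} [Fintype n] [RCLike 𝕜] [DecidableEq n]
    {A : Matrix n n 𝕜} (hA : A.PosSemidef) : Matrix n n 𝕜 :=
  hA.1.eigenvectorUnitary.1 * diagonal ((↑) ∘ (Real.sqrt ∘ hA.1.eigenvalues)) *
    (star hA.1.eigenvectorUnitary : Matrix n n 𝕜)
end

/-- The Euclidean norm of a vector in `ℝ^d`. -/
noncomputable def evnorm {d : ℕ} (v : Fin d → ℝ) : ℝ := Real.sqrt (v ⬝ᵥ v)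

namespace E2Aux

variable {d : ℕ}

noncomputable def toE (v : Fin d → ℝ) : EuclideanSpace ℝ (Fin d) := (WithLp.equiv 2 _).symm v

lemma evnorm_eq_norm (v : Fin d → ℝ) : evnorm v = ‖toE v‖ := by
  rw [evnorm, toE, EuclideanSpace.norm_eq]
  congr 1
  refine Finset.sum_congr rfl fun i _ => ?_
  simp [Real.norm_eq_abs, sq_abs, sq, dotProduct]

lemma sqrt_mul_self' {A : Matrix (Fin d) (Fin d) ℝ} (hA : A.PosSemidef) :
    hA.sqrt * hA.sqrt = A := by
  have hU : (star hA.1.eigenvectorUnitary : Matrix (Fin d) (Fin d) ℝ) * hA.1.eigenvectorUnitary.1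
      = 1 := Unitary.coe_star_mul_self _
  have hD : diagonal (((↑) : ℝ → ℝ) ∘ (Real.sqrt ∘ hA.1.eigenvalues))
      * diagonal (((↑) : ℝ → ℝ) ∘ (Real.sqrt ∘ hA.1.eigenvalues))
      = diagonal (RCLike.ofReal ∘ hA.1.eigenvalues) := by
    rw [diagonal_mul_diagonal]
    congr 1
    funext i
    simp [Real.mul_self_sqrt (hA.eigenvalues_nonneg i)]
  conv_rhs => rw [hA.1.spectral_theorem, Unitary.conjStarAlgAut_apply]
  rw [Matrix.PosSemidef.sqrt, ← hD]
  calc _ = hA.1.eigenvectorUnitary.1 * diagonal (((↑) : ℝ → ℝ) ∘ (Real.sqrt ∘ hA.1.eigenvalues))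
        * ((star hA.1.eigenvectorUnitary : Matrix (Fin d) (Fin d) ℝ)
          * hA.1.eigenvectorUnitary.1)
        * diagonal (((↑) : ℝ → ℝ) ∘ (Real.sqrt ∘ hA.1.eigenvalues))
        * (star hA.1.eigenvectorUnitary : Matrix (Fin d) (Fin d) ℝ) := by
          simp only [Matrix.mul_assoc]; rfl
    _ = _ := by rw [hU, Matrix.mul_one]; simp only [Matrix.mul_assoc]

lemma sqrt_herm' {A : Matrix (Fin d) (Fin d) ℝ} (hA : A.PosSemidef) :
    (hA.sqrt)ᴴ = hA.sqrt := by
  rw [Matrix.PosSemidef.sqrt, conjTranspose_mul, conjTranspose_mul, diagonal_conjTranspose]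
  simp [Matrix.mul_assoc, star_eq_conjTranspose]

lemma inner_toE (u v : Fin d → ℝ) : (inner ℝ (toE u) (toE v) : ℝ) = u ⬝ᵥ v := by
  simp [toE, PiLp.inner_apply, dotProduct, mul_comm]

lemma abs_dot_le (u v : Fin d → ℝ) : |u ⬝ᵥ v| ≤ evnorm u * evnorm v := by
  rw [evnorm_eq_norm, evnorm_eq_norm, ← inner_toE]
  exact abs_real_inner_le_norm _ _

lemma toE_mulVec (A : Matrix (Fin d) (Fin d) ℝ) (v : Fin d → ℝ) :
    toE (A *ᵥ v) = Matrix.toEuclideanCLM (𝕜 := ℝ) A (toE v) := by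
  rfl

lemma evnorm_mulVec_le (A : Matrix (Fin d) (Fin d) ℝ) (v : Fin d → ℝ) :
    evnorm (A *ᵥ v) ≤ specNorm A * evnorm v := by
  rw [evnorm_eq_norm, evnorm_eq_norm, toE_mulVec]
  exact (Matrix.toEuclideanCLM (𝕜 := ℝ) A).le_opNorm (toE v)

lemma specNorm_nonneg (A : Matrix (Fin d) (Fin d) ℝ) : 0 ≤ specNorm A := norm_nonneg _

lemma specNorm_mul_le (A B : Matrix (Fin d) (Fin d) ℝ) :
    specNorm (A * B) ≤ specNorm A * specNorm B := by
  simp only [specNorm, _root_.map_mul]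
  exact norm_mul_le _ _

lemma specNorm_add_le (A B : Matrix (Fin d) (Fin d) ℝ) :
    specNorm (A + B) ≤ specNorm A + specNorm B := by
  simp only [specNorm, _root_.map_add]
  exact norm_add_le _ _

lemma pow_norm_bound {R : Type*} [NormedRing R] [NormOneClass R] (a b : R)
    (ha : ‖a‖ ≤ 1) (n : ℕ) :
    ‖b ^ n‖ ≤ (1 + ‖b - a‖) ^ n ∧ ‖b ^ n - a ^ n‖ ≤ (1 + ‖b - a‖) ^ n - 1 := by
  induction n with
  | zero => simp
  | succ n ih =>
    obtain ⟨h1, h2⟩ := ih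
    set δ := ‖b - a‖ with hδ
    have hδ0 : 0 ≤ δ := norm_nonneg _
    have hb : ‖b‖ ≤ 1 + δ := by
      calc ‖b‖ = ‖a + (b - a)‖ := by rw [add_sub_cancel]
        _ ≤ ‖a‖ + δ := norm_add_le _ _
        _ ≤ 1 + δ := by linarith
    have h1' : (0:ℝ) ≤ (1 + δ) ^ n := by positivity
    constructor
    · calc ‖b ^ (n+1)‖ = ‖b ^ n * b‖ := by rw [pow_succ]
        _ ≤ ‖b ^ n‖ * ‖b‖ := norm_mul_le _ _
        _ ≤ (1 + δ) ^ n * (1 + δ) :=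
            mul_le_mul h1 hb (norm_nonneg _) h1'
        _ = (1 + δ) ^ (n+1) := (pow_succ _ _).symm
    · have key : b ^ (n+1) - a ^ (n+1) = b ^ n * (b - a) + (b ^ n - a ^ n) * a := by
        noncomm_ring
      have hge : (1:ℝ) ≤ (1 + δ) ^ n := one_le_pow₀ (by linarith)
      calc ‖b ^ (n+1) - a ^ (n+1)‖ = ‖b ^ n * (b - a) + (b ^ n - a ^ n) * a‖ := by rw [key]
        _ ≤ ‖b ^ n * (b - a)‖ + ‖(b ^ n - a ^ n) * a‖ := norm_add_le _ _
        _ ≤ ‖b ^ n‖ * δ + ‖b ^ n - a ^ n‖ * ‖a‖ := by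
            gcongr <;> exact norm_mul_le _ _
        _ ≤ (1 + δ) ^ n * δ + ((1 + δ) ^ n - 1) * 1 :=
            add_le_add (mul_le_mul_of_nonneg_right h1 hδ0)
              (mul_le_mul h2 ha (norm_nonneg _) (by linarith))
        _ = (1 + δ) ^ (n+1) - 1 := by ring

lemma conj_pow (P Pi A : Matrix (Fin d) (Fin d) ℝ) (h1 : P * Pi = 1) (h2 : Pi * P = 1)
    (n : ℕ) : (P * A * Pi) ^ n = P * A ^ n * Pi := by
  induction n with
  | zero => simp [h1]
  | succ n ih =>
    rw [pow_succ, ih, pow_succ]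
    calc P * A ^ n * Pi * (P * A * Pi) = P * A ^ n * (Pi * P) * A * Pi := by
          simp only [Matrix.mul_assoc]
      _ = P * (A ^ n * A) * Pi := by rw [h2]; simp only [Matrix.mul_assoc, Matrix.mul_one]
      _ = P * (A ^ n * A) * Pi := rfl

lemma symm_dot (A : Matrix (Fin d) (Fin d) ℝ) (hA : Aᵀ = A) (x z : Fin d → ℝ) :
    (A *ᵥ x) ⬝ᵥ z = x ⬝ᵥ (A *ᵥ z) := by
  have h := Matrix.mulVec_transpose A x
  rw [hA] at h
  rw [h, ← Matrix.dotProduct_mulVec]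

end E2Aux

open E2Aux

/-- **Deterministic bound on the high-order error term `E₂` of fitted Q-iteration.**
Using the contraction `‖(Σ^π)^{1/2} M (Σ^π)^{-1/2}‖₂ ≤ 1` of the true conditional mean
embedding, the error accumulates only polynomially in the horizon. -/
theorem E2_high_order_bound (d : ℕ) (hd : 1 ≤ d) (H : ℕ) (N : ℝ) (hN : 0 < N)
    (S Spi : Matrix (Fin d) (Fin d) ℝ) (hS : S.PosDef) (hSpi : Spi.PosDef)
    (Shat : Matrix (Fin d) (Fin d) ℝ) (hShat : IsUnit Shat)
    (M Mhat : Matrix (Fin d) (Fin d) ℝ)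
    (hcontr : specNorm (hSpi.posSemidef.sqrt * M * (hSpi.posSemidef.sqrt)⁻¹) ≤ 1)
    (ν0 : Fin d → ℝ) (ΔW : ℕ → Fin d → ℝ)
    (ΔX ΔM : Matrix (Fin d) (Fin d) ℝ)
    (hΔX : ΔX = N • Shat⁻¹ - S⁻¹) (hΔM : ΔM = Mhat - M)
    (νhat ν : ℕ → Fin d → ℝ)
    (hνhat : ∀ h, νhat h = (Mhatᵀ) ^ h *ᵥ ν0)
    (hν : ∀ h, ν h = (Mᵀ) ^ h *ᵥ ν0)
    (E2 : ℝ)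
    (hE2 : E2 = ∑ h ∈ Finset.range (H + 1),
      (N * (νhat h ⬝ᵥ Shat⁻¹ *ᵥ ΔW h) - ν h ⬝ᵥ S⁻¹ *ᵥ ΔW h)) :
    |E2| ≤ ∑ h ∈ Finset.range (H + 1),
      Real.sqrt (ν0 ⬝ᵥ Spi⁻¹ *ᵥ ν0)
        * specNorm (hSpi.posSemidef.sqrt * (hS.posSemidef.sqrt)⁻¹)
        * evnorm ((hS.posSemidef.sqrt)⁻¹ *ᵥ ΔW h)
        * ((1 + specNorm (hSpi.posSemidef.sqrt * ΔM * (hSpi.posSemidef.sqrt)⁻¹)) ^ h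
            * (1 + specNorm (hS.posSemidef.sqrt * ΔX * hS.posSemidef.sqrt)) - 1) := by
  have hne : Nonempty (Fin d) := ⟨⟨0, hd⟩⟩
  haveI : Nontrivial (Fin d → ℝ) := inferInstance
  haveI : Nontrivial (EuclideanSpace ℝ (Fin d)) := (WithLp.equiv 2 _).nontrivial
  set P := hSpi.posSemidef.sqrt with hPdef
  set Q := hS.posSemidef.sqrt with hQdef
  have hPP : P * P = Spi := sqrt_mul_self' hSpi.posSemidef
  have hQQ : Q * Q = S := sqrt_mul_self' hS.posSemidef
  have hPdet : IsUnit P.det := by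
    have h1 : P.det * P.det = Spi.det := by rw [← Matrix.det_mul, hPP]
    have h2 : (0:ℝ) < Spi.det := hSpi.det_pos
    refine isUnit_iff_ne_zero.mpr (fun h => ?_)
    rw [h, mul_zero] at h1
    exact absurd h1.symm (ne_of_gt h2)
  have hQdet : IsUnit Q.det := by
    have h1 : Q.det * Q.det = S.det := by rw [← Matrix.det_mul, hQQ]
    have h2 : (0:ℝ) < S.det := hS.det_pos
    refine isUnit_iff_ne_zero.mpr (fun h => ?_)
    rw [h, mul_zero] at h1
    exact absurd h1.symm (ne_of_gt h2)
  have hPl : P⁻¹ * P = 1 := Matrix.nonsing_inv_mul P hPdet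
  have hPr : P * P⁻¹ = 1 := Matrix.mul_nonsing_inv P hPdet
  have hQl : Q⁻¹ * Q = 1 := Matrix.nonsing_inv_mul Q hQdet
  have hQr : Q * Q⁻¹ = 1 := Matrix.mul_nonsing_inv Q hQdet
  have hSpiInv : P⁻¹ * P⁻¹ = Spi⁻¹ := by rw [← Matrix.mul_inv_rev, hPP]
  have hSInv : Q⁻¹ * Q⁻¹ = S⁻¹ := by rw [← Matrix.mul_inv_rev, hQQ]
  have hPsym : Pᵀ = P := by
    rw [← Matrix.conjTranspose_eq_transpose_of_trivial]
    exact sqrt_herm' hSpi.posSemidef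
  have hPisym : (P⁻¹)ᵀ = P⁻¹ := by rw [Matrix.transpose_nonsing_inv, hPsym]
  have hu_eq : Real.sqrt (ν0 ⬝ᵥ Spi⁻¹ *ᵥ ν0) = evnorm (P⁻¹ *ᵥ ν0) := by
    rw [evnorm, symm_dot _ hPisym, Matrix.mulVec_mulVec, hSpiInv]
  rw [hE2]
  refine (Finset.abs_sum_le_sum_abs _ _).trans (Finset.sum_le_sum fun h _ => ?_)
  -- notation
  set a := P * M * P⁻¹ with hadef
  set b := P * Mhat * P⁻¹ with hbdef
  set C := b ^ h * (P * Q⁻¹) * (Q * ΔX * Q) + (b ^ h - a ^ h) * (P * Q⁻¹) with hCdef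
  set δ := specNorm (P * ΔM * P⁻¹) with hδdef
  set x := specNorm (Q * ΔX * Q) with hxdef
  set nPQ := specNorm (P * Q⁻¹) with hnPQdef
  have hδ0 : 0 ≤ δ := specNorm_nonneg _
  have hx0 : 0 ≤ x := specNorm_nonneg _
  have hnPQ0 : 0 ≤ nPQ := specNorm_nonneg _
  -- Step A : scalar to matrix form
  have hmat : Mhat ^ h * ΔX + (Mhat ^ h - M ^ h) * S⁻¹
      = Mhat ^ h * (N • Shat⁻¹) - M ^ h * S⁻¹ := by
    rw [hΔX, Matrix.mul_sub, Matrix.sub_mul]; abel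
  have e1 : ((Mhat ^ h)ᵀ *ᵥ ν0) ⬝ᵥ (Shat⁻¹ *ᵥ ΔW h)
      = ν0 ⬝ᵥ (Mhat ^ h * Shat⁻¹) *ᵥ ΔW h := by
    rw [Matrix.mulVec_transpose, ← Matrix.dotProduct_mulVec, Matrix.mulVec_mulVec]
  have e2 : ((M ^ h)ᵀ *ᵥ ν0) ⬝ᵥ (S⁻¹ *ᵥ ΔW h)
      = ν0 ⬝ᵥ (M ^ h * S⁻¹) *ᵥ ΔW h := by
    rw [Matrix.mulVec_transpose, ← Matrix.dotProduct_mulVec, Matrix.mulVec_mulVec]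
  have stepA : N * (νhat h ⬝ᵥ Shat⁻¹ *ᵥ ΔW h) - ν h ⬝ᵥ S⁻¹ *ᵥ ΔW h
      = ν0 ⬝ᵥ ((Mhat ^ h * ΔX + (Mhat ^ h - M ^ h) * S⁻¹) *ᵥ ΔW h) := by
    rw [hνhat, hν, ← Matrix.transpose_pow, ← Matrix.transpose_pow, e1, e2, hmat,
      Matrix.sub_mulVec, dotProduct_sub]
    congr 1
    rw [Matrix.mul_smul, Matrix.smul_mulVec, dotProduct_smul, smul_eq_mul]
  -- Step B : matrix identity
  have hconjM : a ^ h = P * M ^ h * P⁻¹ := conj_pow P P⁻¹ M hPr hPl h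
  have hconjMhat : b ^ h = P * Mhat ^ h * P⁻¹ := conj_pow P P⁻¹ Mhat hPr hPl h
  have cP : ∀ X : Matrix (Fin d) (Fin d) ℝ, P⁻¹ * (P * X) = X := fun X => by
    rw [← Matrix.mul_assoc, hPl, Matrix.one_mul]
  have cP' : ∀ X : Matrix (Fin d) (Fin d) ℝ, P * (P⁻¹ * X) = X := fun X => by
    rw [← Matrix.mul_assoc, hPr, Matrix.one_mul]
  have cQ : ∀ X : Matrix (Fin d) (Fin d) ℝ, Q * (Q⁻¹ * X) = X := fun X => by
    rw [← Matrix.mul_assoc, hQr, Matrix.one_mul]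
  have cQ' : ∀ X : Matrix (Fin d) (Fin d) ℝ, Q⁻¹ * (Q * X) = X := fun X => by
    rw [← Matrix.mul_assoc, hQl, Matrix.one_mul]
  have hCQ : P⁻¹ * (C * Q⁻¹) = Mhat ^ h * ΔX + (Mhat ^ h - M ^ h) * S⁻¹ := by
    rw [hCdef, hconjM, hconjMhat]
    simp only [Matrix.add_mul, Matrix.sub_mul, Matrix.mul_add, Matrix.mul_sub,
      Matrix.mul_assoc, cP, cP', cQ, cQ', hPr, hPl, hQr, hQl, Matrix.mul_one, hSInv]
  -- Step C : dot product transfer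
  have stepC : ν0 ⬝ᵥ ((Mhat ^ h * ΔX + (Mhat ^ h - M ^ h) * S⁻¹) *ᵥ ΔW h)
      = (P⁻¹ *ᵥ ν0) ⬝ᵥ (C *ᵥ (Q⁻¹ *ᵥ ΔW h)) := by
    rw [← hCQ, ← Matrix.mulVec_mulVec, ← Matrix.mulVec_mulVec, ← symm_dot _ hPisym]
  -- Step D : CLM norm bounds
  have hφa : ‖Matrix.toEuclideanCLM (𝕜 := ℝ) a‖ ≤ 1 := hcontr
  have hbd := pow_norm_bound (Matrix.toEuclideanCLM (𝕜 := ℝ) a)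
    (Matrix.toEuclideanCLM (𝕜 := ℝ) b) hφa h
  have hba : b - a = P * ΔM * P⁻¹ := by
    rw [hΔM, Matrix.mul_sub, Matrix.sub_mul]
  have hδeq : ‖Matrix.toEuclideanCLM (𝕜 := ℝ) b - Matrix.toEuclideanCLM (𝕜 := ℝ) a‖ = δ := by
    rw [← _root_.map_sub, hba]; rfl
  have hpow1 : specNorm (b ^ h) ≤ (1 + δ) ^ h := by
    have := hbd.1
    rw [hδeq] at this
    simpa only [specNorm, _root_.map_pow] using this
  have hpow2 : specNorm (b ^ h - a ^ h) ≤ (1 + δ) ^ h - 1 := by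
    have := hbd.2
    rw [hδeq] at this
    simpa only [specNorm, _root_.map_sub, _root_.map_pow] using this
  -- Step E : bound on specNorm C
  have A1 : specNorm (b ^ h * (P * Q⁻¹) * (Q * ΔX * Q)) ≤ (1 + δ) ^ h * nPQ * x :=
    calc specNorm (b ^ h * (P * Q⁻¹) * (Q * ΔX * Q))
        ≤ specNorm (b ^ h * (P * Q⁻¹)) * x := specNorm_mul_le _ _
      _ ≤ (specNorm (b ^ h) * nPQ) * x :=
          mul_le_mul_of_nonneg_right (specNorm_mul_le _ _) hx0
      _ ≤ ((1 + δ) ^ h * nPQ) * x :=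
          mul_le_mul_of_nonneg_right (mul_le_mul_of_nonneg_right hpow1 hnPQ0) hx0
  have A2 : specNorm ((b ^ h - a ^ h) * (P * Q⁻¹)) ≤ ((1 + δ) ^ h - 1) * nPQ :=
    calc specNorm ((b ^ h - a ^ h) * (P * Q⁻¹))
        ≤ specNorm (b ^ h - a ^ h) * nPQ := specNorm_mul_le _ _
      _ ≤ ((1 + δ) ^ h - 1) * nPQ := mul_le_mul_of_nonneg_right hpow2 hnPQ0
  have hC1 : specNorm C ≤ nPQ * ((1 + δ) ^ h * (1 + x) - 1) := by
    refine ((specNorm_add_le _ _).trans (add_le_add A1 A2)).trans (le_of_eq ?_)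
    ring
  -- Step F : final estimate
  have hw0 : 0 ≤ evnorm (Q⁻¹ *ᵥ ΔW h) := Real.sqrt_nonneg _
  have hu0 : 0 ≤ evnorm (P⁻¹ *ᵥ ν0) := Real.sqrt_nonneg _
  calc |N * (νhat h ⬝ᵥ Shat⁻¹ *ᵥ ΔW h) - ν h ⬝ᵥ S⁻¹ *ᵥ ΔW h|
      = |(P⁻¹ *ᵥ ν0) ⬝ᵥ (C *ᵥ (Q⁻¹ *ᵥ ΔW h))| := by rw [stepA, stepC]
    _ ≤ evnorm (P⁻¹ *ᵥ ν0) * evnorm (C *ᵥ (Q⁻¹ *ᵥ ΔW h)) := abs_dot_le _ _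
    _ ≤ evnorm (P⁻¹ *ᵥ ν0) * (specNorm C * evnorm (Q⁻¹ *ᵥ ΔW h)) :=
        mul_le_mul_of_nonneg_left (evnorm_mulVec_le _ _) hu0
    _ ≤ evnorm (P⁻¹ *ᵥ ν0) * ((nPQ * ((1 + δ) ^ h * (1 + x) - 1)) * evnorm (Q⁻¹ *ᵥ ΔW h)) :=
        mul_le_mul_of_nonneg_left (mul_le_mul_of_nonneg_right hC1 hw0) hu0
    _ = Real.sqrt (ν0 ⬝ᵥ Spi⁻¹ *ᵥ ν0) * nPQ * evnorm (Q⁻¹ *ᵥ ΔW h)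
          * ((1 + δ) ^ h * (1 + x) - 1) := by rw [hu_eq]; ring
end

section
/- Let (Ω, 𝓕) be a measurable space and let P and P̃ be probability measures on Ω with P̃ absolutely continuous with respect to P; let g denote the Radon–Nikodym derivative dP̃/dP. Let v̂ : Ω → ℝ be measurable, and let v, ṽ ∈ ℝ and ρ, ρ̃ ≥ 0 satisfy |v − ṽ| ≥ ρ + ρ̃. If P({ω : g(ω) ≥ 1/2}) ≥ 1/2, then P({ω : |v − v̂(ω)| ≥ ρ}) ≥ 1/6 or P̃({ω : |ṽ − v̂(ω)| ≥ ρ̃}) ≥ 1/6. -/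
/-!
Since `P̃` is at least the measure with density `dP̃/dP` with respect to `P`, it dominates
`c • P` on the event `G = {dP̃/dP ≥ c}`. So for any set `A`, splitting `G` along `A` gives
`c P(G) ≤ c P(A) + P̃(Aᶜ)`. Take `A` to be the event that `v̂` misses `v` by at least `ρ`:
by the triangle inequality and `|v - ṽ| ≥ ρ + ρ̃`, off `A` the estimate misses `ṽ` by at
least `ρ̃`. With `c = 1/2` and `P(G) ≥ 1/2` this reads `1/4 ≤ P(A)/2 + P̃(Aᶜ)`, which is
impossible if both probabilities are below `1/6`.
-/

open MeasureTheory
open scoped ENNReal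

namespace MeasureTheory.Measure

variable {Ω : Type*} [MeasurableSpace Ω] {μ ν : Measure Ω}

lemma mul_measure_le_of_forall_le_rnDeriv {c : ℝ≥0∞} {s : Set Ω}
    (h : ∀ ω ∈ s, c ≤ ν.rnDeriv μ ω) : c * μ s ≤ ν s :=
  calc c * μ s = ∫⁻ _ in s, c ∂μ := (setLIntegral_const s c).symm
    _ ≤ ∫⁻ ω in s, ν.rnDeriv μ ω ∂μ := setLIntegral_mono (measurable_rnDeriv ν μ) h
    _ ≤ ν s := setLIntegral_rnDeriv_le s

lemma mul_measure_setOf_le_rnDeriv_le (c : ℝ≥0∞) (A : Set Ω) :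
    c * μ {ω | c ≤ ν.rnDeriv μ ω} ≤ c * μ A + ν Aᶜ := by
  set G := {ω | c ≤ ν.rnDeriv μ ω}
  calc c * μ G ≤ c * (μ A + μ (G \ A)) := by
        gcongr
        exact (measure_le_inter_add_sdiff μ G A).trans
          (add_le_add_left (measure_mono Set.inter_subset_right) _)
    _ = c * μ A + c * μ (G \ A) := mul_add _ _ _
    _ ≤ c * μ A + ν Aᶜ := by
        gcongr
        exact (mul_measure_le_of_forall_le_rnDeriv fun ω hω ↦ hω.1).trans
          (measure_mono fun ω hω ↦ hω.2)

end MeasureTheory.Measure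

lemma le_abs_sub_of_abs_sub_lt {x y z ρ ρ' : ℝ} (hgap : ρ + ρ' ≤ |x - y|) (h : |x - z| < ρ) :
    ρ' ≤ |y - z| := by
  have := abs_sub_le x z y
  rw [abs_sub_comm z y] at this
  linarith

lemma ENNReal.one_div_six_le_or_of_half_mul_half_le {a b : ℝ≥0∞}
    (h : 1 / 2 * (1 / 2) ≤ 1 / 2 * a + b) :
    1 / 6 ≤ a ∨ 1 / 6 ≤ b := by
  by_contra! hab
  obtain ⟨ha, hb⟩ := hab
  have ha' := ENNReal.toReal_strict_mono (by simp) ha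
  have hb' := ENNReal.toReal_strict_mono (by simp) hb
  have h' := ENNReal.toReal_mono (by finiteness) h
  rw [ENNReal.toReal_add (by finiteness) (by finiteness)] at h'
  simp only [ENNReal.toReal_mul, ENNReal.toReal_div, ENNReal.toReal_one,
    ENNReal.toReal_ofNat] at ha' hb' h'
  linarith

theorem likelihood_ratio_test_reduction_general {Ω : Type*} [MeasurableSpace Ω]
    (P Pt : Measure Ω)
    (vhat : Ω → ℝ)
    (v vt ρ ρt : ℝ)
    (hgap : ρ + ρt ≤ |v - vt|)
    (hlr : (1 / 2 : ENNReal) ≤ P {ω | (1 / 2 : ENNReal) ≤ Pt.rnDeriv P ω}) :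
    (1 / 6 : ENNReal) ≤ P {ω | ρ ≤ |v - vhat ω|} ∨
      (1 / 6 : ENNReal) ≤ Pt {ω | ρt ≤ |vt - vhat ω|} := by
  set A := {ω | ρ ≤ |v - vhat ω|}
  have hmiss : Aᶜ ⊆ {ω | ρt ≤ |vt - vhat ω|} := fun ω hω ↦
    le_abs_sub_of_abs_sub_lt hgap (not_le.mp hω)
  refine (ENNReal.one_div_six_le_or_of_half_mul_half_le ?_).imp_right
    fun h ↦ h.trans (measure_mono hmiss)
  calc (1 / 2 : ℝ≥0∞) * (1 / 2) ≤ 1 / 2 * P {ω | 1 / 2 ≤ Pt.rnDeriv P ω} := by gcongr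
    _ ≤ 1 / 2 * P A + Pt Aᶜ := Measure.mul_measure_setOf_le_rnDeriv_le _ A

/-- **Reduction of the minimax lower bound to a likelihood-ratio test.**
If the Radon–Nikodym derivative `g = dP̃/dP` satisfies `P(g ≥ 1/2) ≥ 1/2` and
`|v − ṽ| ≥ ρ + ρ̃`, then any estimator `v̂` incurs error at least `ρ` under `P` with
probability at least `1/6`, or error at least `ρ̃` under `P̃` with probability at
least `1/6`. -/
theorem likelihood_ratio_test_reduction {Ω : Type*} [MeasurableSpace Ω]
    (P Pt : Measure Ω) [IsProbabilityMeasure P] [IsProbabilityMeasure Pt]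
    (hac : Pt ≪ P)
    (vhat : Ω → ℝ) (hvhat : Measurable vhat)
    (v vt ρ ρt : ℝ) (hρ : 0 ≤ ρ) (hρt : 0 ≤ ρt)
    (hgap : ρ + ρt ≤ |v - vt|)
    (hlr : (1 / 2 : ENNReal) ≤ P {ω | (1 / 2 : ENNReal) ≤ Pt.rnDeriv P ω}) :
    (1 / 6 : ENNReal) ≤ P {ω | ρ ≤ |v - vhat ω|} ∨
      (1 / 6 : ENNReal) ≤ Pt {ω | ρt ≤ |vt - vhat ω|} :=
  likelihood_ratio_test_reduction_general P Pt vhat v vt ρ ρt hgap hlr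
end

section
/- Fix d, H ∈ ℕ with d ≥ 1, let Σ̂ ∈ ℝ^{d×d} be symmetric positive definite, M̂ ∈ ℝ^{d×d}, R̂ ∈ ℝ^d, and ν_0 ∈ ℝ^d. Let w_0, w_1, …, w_{H+1} ∈ ℝ^d with w_{H+1} = 0. Define ŵ_{H+1} := 0 and ŵ_h := R̂ + M̂ŵ_{h+1} for h = H, …, 0; define ν̂_h := (M̂ᵀ)^h ν_0 and Ŵ_h := R̂ + M̂w_{h+1} for h = 0, …, H. Then |ν_0ᵀw_0 − ν_0ᵀŵ_0| ≤ Σ_{h=0}^{H} √(ν̂_hᵀ Σ̂^{-1} ν̂_h) · √( (Ŵ_h − w_h)ᵀ Σ̂ (Ŵ_h − w_h) ). -/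
/-!
With `e_h := ν̂_h ⬝ (ŵ_h − w_h)`, the two backward recursions give
`ŵ_h − w_h = M̂ (ŵ_{h+1} − w_{h+1}) + (Ŵ_h − w_h)`, and since `ν̂_{h+1} = M̂ᵀ ν̂_h` this is
`e_h − e_{h+1} = ν̂_h ⬝ (Ŵ_h − w_h)`. The error `e_0` therefore telescopes to the sum of these
terms (as `e_{H+1} = 0`), and each is bounded by Cauchy–Schwarz for the `Σ̂⁻¹`-weighted form
applied to `ν̂_h` and `Σ̂ (Ŵ_h − w_h)`.
-/

open Matrix Finset

variable {n R : Type*} [Fintype n]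

theorem Matrix.PosSemidef.dotProduct_mulVec_sq_le [CommRing R] [LinearOrder R]
    [IsStrictOrderedRing R] [StarRing R] [TrivialStar R] {S : Matrix n n R}
    (hS : S.PosSemidef) (x y : n → R) :
    (x ⬝ᵥ S *ᵥ y) ^ 2 ≤ (x ⬝ᵥ S *ᵥ x) * (y ⬝ᵥ S *ᵥ y) := by
  classical
  have hsymm : y ⬝ᵥ S *ᵥ x = x ⬝ᵥ S *ᵥ y := by
    rw [dotProduct_mulVec, ← mulVec_transpose, dotProduct_comm,
      ← conjTranspose_eq_transpose_of_trivial, hS.isHermitian.eq]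
  have := (toBilin' S).apply_mul_apply_le_of_forall_zero_le
    (fun z => by simpa only [toBilin'_apply', star_trivial] using hS.dotProduct_mulVec_nonneg z) x y
  simpa only [toBilin'_apply', hsymm, ← sq] using this

theorem Matrix.PosDef.abs_dotProduct_le_sqrt_mul_sqrt [DecidableEq n]
    {S : Matrix n n ℝ} (hS : S.PosDef) (u v : n → ℝ) :
    |u ⬝ᵥ v| ≤ √(u ⬝ᵥ S⁻¹ *ᵥ u) * √(v ⬝ᵥ S *ᵥ v) := by
  have hinv : S⁻¹ * S = 1 := nonsing_inv_mul S ((isUnit_iff_isUnit_det S).mp hS.isUnit)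
  have hv : v = S⁻¹ *ᵥ (S *ᵥ v) := by rw [mulVec_mulVec, hinv, one_mulVec]
  have hSv : S *ᵥ v ⬝ᵥ S⁻¹ *ᵥ (S *ᵥ v) = v ⬝ᵥ S *ᵥ v := by
    rw [← hv, dotProduct_comm]
  have hu : 0 ≤ u ⬝ᵥ S⁻¹ *ᵥ u := by
    simpa only [star_trivial] using hS.inv.posSemidef.dotProduct_mulVec_nonneg u
  rw [← Real.sqrt_mul hu, ← hSv]
  apply Real.abs_le_sqrt
  conv_lhs => rw [hv]
  exact hS.inv.posSemidef.dotProduct_mulVec_sq_le u (S *ᵥ v)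

theorem dotProduct_sub_eq_sum_of_backward_recursion [CommRing R] [DecidableEq n] {H : ℕ}
    (M : Matrix n n R) (r ν : n → R) (w ŵ W : ℕ → n → R)
    (hŵ : ∀ h ≤ H, ŵ h = r + M *ᵥ ŵ (h + 1)) (hW : ∀ h ≤ H, W h = r + M *ᵥ w (h + 1)) :
    ν ⬝ᵥ (ŵ 0 - w 0) - ((Mᵀ) ^ (H + 1) *ᵥ ν) ⬝ᵥ (ŵ (H + 1) - w (H + 1))
      = ∑ h ∈ range (H + 1), ((Mᵀ) ^ h *ᵥ ν) ⬝ᵥ (W h - w h) := by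
  set e : ℕ → R := fun h => ((Mᵀ) ^ h *ᵥ ν) ⬝ᵥ (ŵ h - w h)
  have step : ∀ h ≤ H, e h - e (h + 1) = ((Mᵀ) ^ h *ᵥ ν) ⬝ᵥ (W h - w h) := by
    intro h hh
    have split : ŵ h - w h = M *ᵥ (ŵ (h + 1) - w (h + 1)) + (W h - w h) := by
      rw [hŵ h hh, hW h hh, mulVec_sub]; abel
    simp only [e, split, dotProduct_add, dotProduct_mulVec, ← mulVec_transpose,
      pow_succ', ← mulVec_mulVec, add_sub_cancel_left]
  calc ν ⬝ᵥ (ŵ 0 - w 0) - ((Mᵀ) ^ (H + 1) *ᵥ ν) ⬝ᵥ (ŵ (H + 1) - w (H + 1))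
        = e 0 - e (H + 1) := by simp only [e, pow_zero, one_mulVec]
    _ = ∑ h ∈ range (H + 1), (e h - e (h + 1)) := (sum_range_sub' e _).symm
    _ = _ := sum_congr rfl fun h hh => step h (Nat.lt_succ_iff.mp (mem_range.mp hh))

theorem confidence_bound_decomposition_general (d H : ℕ)
    (Shat : Matrix (Fin d) (Fin d) ℝ) (hShat : Shat.PosDef)
    (Mhat : Matrix (Fin d) (Fin d) ℝ) (Rhat : Fin d → ℝ) (ν0 : Fin d → ℝ)
    (w : ℕ → Fin d → ℝ) (hw_top : w (H + 1) = 0)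
    (what : ℕ → Fin d → ℝ) (hwhat_top : what (H + 1) = 0)
    (hwhat : ∀ h ≤ H, what h = Rhat + Mhat *ᵥ what (h + 1))
    (νhat : ℕ → Fin d → ℝ) (hνhat : ∀ h, νhat h = (Mhatᵀ) ^ h *ᵥ ν0)
    (What : ℕ → Fin d → ℝ) (hWhat : ∀ h ≤ H, What h = Rhat + Mhat *ᵥ w (h + 1)) :
    |ν0 ⬝ᵥ w 0 - ν0 ⬝ᵥ what 0|
      ≤ ∑ h ∈ Finset.range (H + 1),
          Real.sqrt (νhat h ⬝ᵥ Shat⁻¹ *ᵥ νhat h)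
            * Real.sqrt ((What h - w h) ⬝ᵥ Shat *ᵥ (What h - w h)) := by
  have error_eq : ν0 ⬝ᵥ what 0 - ν0 ⬝ᵥ w 0 = ∑ h ∈ range (H + 1), νhat h ⬝ᵥ (What h - w h) := by
    have := dotProduct_sub_eq_sum_of_backward_recursion Mhat Rhat ν0 w what What hwhat hWhat
    simpa only [hw_top, hwhat_top, sub_zero, dotProduct_zero, dotProduct_sub, hνhat] using this
  rw [abs_sub_comm, error_eq]
  calc _ ≤ ∑ h ∈ range (H + 1), |νhat h ⬝ᵥ (What h - w h)| := abs_sum_le_sum_abs _ _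
    _ ≤ _ := sum_le_sum fun h _ => hShat.abs_dotProduct_le_sqrt_mul_sqrt _ _

/-- **Cauchy–Schwarz decomposition underlying the computable confidence bound.**
With `ŵ_h` the FQI iterates, `ν̂_h = (M̂ᵀ)^h ν₀` and `Ŵ_h = R̂ + M̂ w_{h+1}`, the
off-policy evaluation error satisfies
`|ν₀ᵀw₀ − ν₀ᵀŵ₀| ≤ Σ_h √(ν̂_hᵀ Σ̂⁻¹ ν̂_h) √((Ŵ_h − w_h)ᵀ Σ̂ (Ŵ_h − w_h))`. -/
theorem confidence_bound_decomposition (d H : ℕ) (hd : 1 ≤ d)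
    (Shat : Matrix (Fin d) (Fin d) ℝ) (hShat : Shat.PosDef)
    (Mhat : Matrix (Fin d) (Fin d) ℝ) (Rhat : Fin d → ℝ) (ν0 : Fin d → ℝ)
    (w : ℕ → Fin d → ℝ) (hw_top : w (H + 1) = 0)
    (what : ℕ → Fin d → ℝ) (hwhat_top : what (H + 1) = 0)
    (hwhat : ∀ h ≤ H, what h = Rhat + Mhat *ᵥ what (h + 1))
    (νhat : ℕ → Fin d → ℝ) (hνhat : ∀ h, νhat h = (Mhatᵀ) ^ h *ᵥ ν0)
    (What : ℕ → Fin d → ℝ) (hWhat : ∀ h ≤ H, What h = Rhat + Mhat *ᵥ w (h + 1)) :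
    |ν0 ⬝ᵥ w 0 - ν0 ⬝ᵥ what 0|
      ≤ ∑ h ∈ Finset.range (H + 1),
          Real.sqrt (νhat h ⬝ᵥ Shat⁻¹ *ᵥ νhat h)
            * Real.sqrt ((What h - w h) ⬝ᵥ Shat *ᵥ (What h - w h)) :=
  confidence_bound_decomposition_general d H Shat hShat Mhat Rhat ν0 w hw_top what hwhat_top hwhat
    νhat hνhat What hWhat
end

section
/- Let d, n ∈ ℕ with d ≥ 1, n ≥ 1, let λ > 0, and let φ_1, …, φ_n ∈ ℝ^d satisfy ‖φ_t‖_2 ≤ 1 for all t. Define Σ̂_t := λI_d + Σ_{s=1}^{t} φ_sφ_sᵀ for t = 0, 1, …, n (so Σ̂_0 = λI_d). Then ln det(Σ̂_n) = d ln λ + Σ_{t=1}^{n} ln(1 + φ_tᵀ Σ̂_{t-1}^{-1} φ_t), and ln det(Σ̂_n) ≤ d ln(λ + n/d). -/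
/-!
Adding `φ φᵀ` to a positive definite `Σ` multiplies its determinant by `1 + φᵀ Σ⁻¹ φ`
(matrix determinant lemma), so the log-determinant telescopes into the stated sum.
For the bound, AM–GM on the eigenvalues gives `ln det Σ ≤ d ln (tr Σ / d)`, and
`tr Σ̂_n = dλ + Σ_t ‖φ_t‖² ≤ dλ + n`.
-/

open Matrix Finset

theorem Real.sum_log_le_card_mul_log_mean {ι : Type*} [Fintype ι] [Nonempty ι] {z : ι → ℝ}
    (hz : ∀ i, 0 < z i) :
    ∑ i, Real.log (z i) ≤ Fintype.card ι * Real.log ((∑ i, z i) / Fintype.card ι) := by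
  have hcard : (0 : ℝ) < Fintype.card ι := by exact_mod_cast Fintype.card_pos
  have hjensen := strictConcaveOn_log_Ioi.concaveOn.le_map_sum (t := univ)
    (w := fun _ => (Fintype.card ι : ℝ)⁻¹) (p := z) (fun _ _ => by positivity)
    (by simp [card_univ, hcard.ne']) (fun i _ => hz i)
  simp only [smul_eq_mul, ← mul_sum] at hjensen
  rw [inv_mul_eq_div, inv_mul_eq_div, div_le_iff₀' hcard] at hjensen
  exact hjensen

namespace Matrix

variable {n : Type*} [Fintype n]

theorem PosDef.add_sum_vecMulVec_self {ι : Type*} {A : Matrix n n ℝ} (hA : A.PosDef)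
    (s : Finset ι) (u : ι → n → ℝ) : (A + ∑ i ∈ s, vecMulVec (u i) (u i)).PosDef :=
  hA.add_posSemidef <| posSemidef_sum s fun i _ => by
    simpa using posSemidef_vecMulVec_self_star (u i)

variable [DecidableEq n]

theorem det_one_add_vecMulVec {R : Type*} [CommRing R] (u v : n → R) :
    (1 + vecMulVec u v).det = 1 + v ⬝ᵥ u := by
  rw [vecMulVec_eq Unit, det_one_add_replicateCol_mul_replicateRow]

theorem det_add_vecMulVec {R : Type*} [CommRing R] {A : Matrix n n R} (hA : IsUnit A.det)
    (u v : n → R) : (A + vecMulVec u v).det = A.det * (1 + v ⬝ᵥ A⁻¹ *ᵥ u) := by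
  have hfactor : A + vecMulVec u v = A * (1 + vecMulVec (A⁻¹ *ᵥ u) v) := by
    rw [Matrix.mul_add, Matrix.mul_one, mul_vecMulVec, mulVec_mulVec, mul_nonsing_inv _ hA,
      one_mulVec]
  rw [hfactor, det_mul, det_one_add_vecMulVec]

namespace PosDef

theorem one_add_dotProduct_inv_mulVec_pos {A : Matrix n n ℝ} (hA : A.PosDef) (u : n → ℝ) :
    0 < 1 + u ⬝ᵥ A⁻¹ *ᵥ u := by
  have := hA.inv.posSemidef.dotProduct_mulVec_nonneg u
  simp only [star_trivial] at this
  linarith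

theorem log_det_add_vecMulVec_self {A : Matrix n n ℝ} (hA : A.PosDef) (u : n → ℝ) :
    Real.log (A + vecMulVec u u).det = Real.log A.det + Real.log (1 + u ⬝ᵥ A⁻¹ *ᵥ u) := by
  rw [det_add_vecMulVec hA.det_pos.ne'.isUnit,
    Real.log_mul hA.det_pos.ne' (hA.one_add_dotProduct_inv_mulVec_pos u).ne']

theorem log_det_add_sum_vecMulVec_self {A : Matrix n n ℝ} (hA : A.PosDef) (u : ℕ → n → ℝ)
    (m : ℕ) :
    Real.log (A + ∑ s ∈ range m, vecMulVec (u s) (u s)).det = Real.log A.det +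
      ∑ t ∈ range m,
        Real.log (1 + u t ⬝ᵥ (A + ∑ s ∈ range t, vecMulVec (u s) (u s))⁻¹ *ᵥ u t) := by
  induction m with
  | zero => simp
  | succ m ih =>
    rw [sum_range_succ, ← add_assoc,
      (hA.add_sum_vecMulVec_self (range m) u).log_det_add_vecMulVec_self, ih, sum_range_succ,
      add_assoc]

theorem log_det_le_card_mul_log_trace_div [Nonempty n] {A : Matrix n n ℝ} (hA : A.PosDef) :
    Real.log A.det ≤ Fintype.card n * Real.log (A.trace / Fintype.card n) := by
  rw [hA.isHermitian.det_eq_prod_eigenvalues, hA.isHermitian.trace_eq_sum_eigenvalues]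
  simp only [RCLike.ofReal_real_eq_id, id]
  rw [Real.log_prod fun i _ => (hA.eigenvalues_pos i).ne']
  exact Real.sum_log_le_card_mul_log_mean hA.eigenvalues_pos

end PosDef

theorem trace_smul_one_add_sum_vecMulVec_self {ι : Type*} (c : ℝ) (s : Finset ι)
    (u : ι → n → ℝ) :
    (c • 1 + ∑ i ∈ s, vecMulVec (u i) (u i)).trace =
      Fintype.card n * c + ∑ i ∈ s, u i ⬝ᵥ u i := by
  simp [trace_sum, mul_comm]

end Matrix

/-- Indices are shifted by one: `φ t` and `Shat t` for `t < n` are the paper's `φ_{t+1}`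
and `Σ̂_t`. -/
theorem elliptical_potential_general (d n : ℕ) (hd : 1 ≤ d)
    (lam : ℝ) (hlam : 0 < lam)
    (φ : ℕ → Fin d → ℝ)
    (hφ : ∀ t < n, Real.sqrt (φ t ⬝ᵥ φ t) ≤ 1)
    (Shat : ℕ → Matrix (Fin d) (Fin d) ℝ)
    (hShat : ∀ t, Shat t = lam • (1 : Matrix (Fin d) (Fin d) ℝ)
        + ∑ s ∈ Finset.range t, vecMulVec (φ s) (φ s)) :
    Real.log (Shat n).det
        = d * Real.log lam
          + ∑ t ∈ Finset.range n, Real.log (1 + φ t ⬝ᵥ (Shat t)⁻¹ *ᵥ φ t) ∧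
    Real.log (Shat n).det ≤ d * Real.log (lam + n / d) := by
  have hreg : (lam • 1 : Matrix (Fin d) (Fin d) ℝ).PosDef := PosDef.one.smul hlam
  have hpd : (Shat n).PosDef := hShat n ▸ hreg.add_sum_vecMulVec_self _ φ
  have hd_pos : (0 : ℝ) < d := by exact_mod_cast hd
  have : Nonempty (Fin d) := ⟨⟨0, hd⟩⟩
  refine ⟨?_, ?_⟩
  · simp only [hShat]
    rw [hreg.log_det_add_sum_vecMulVec_self, det_smul, det_one, mul_one, Fintype.card_fin,
      Real.log_pow]
  · have htrace : (Shat n).trace ≤ d * lam + n := by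
      rw [hShat, trace_smul_one_add_sum_vecMulVec_self, Fintype.card_fin]
      grw [sum_le_card_nsmul (range n) _ 1 fun t ht =>
        Real.sqrt_le_one.mp (hφ t (mem_range.mp ht))]
      simp
    calc Real.log (Shat n).det ≤ d * Real.log ((Shat n).trace / d) := by
          simpa using hpd.log_det_le_card_mul_log_trace_div
      _ ≤ d * Real.log (lam + n / d) := by
          gcongr
          · exact div_pos hpd.trace_pos hd_pos
          · rw [div_le_iff₀ hd_pos]
            linarith [show (lam + n / d) * d = d * lam + n by field_simp]

/-- **Elliptical potential (log-determinant) lemma.**  For features of Euclidean norm at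
most one and `Σ̂_t = λI + Σ_{s<t} φ_s φ_sᵀ`,
`ln det Σ̂_n = d ln λ + Σ_{t<n} ln(1 + φ_tᵀ Σ̂_t⁻¹ φ_t)` and `ln det Σ̂_n ≤ d ln(λ + n/d)`.
(Here `φ_t`, `Σ̂_t` for `t = 0, …, n−1` play the role of the paper's `φ_{t+1}`, `Σ̂_t`.) -/
theorem elliptical_potential (d n : ℕ) (hd : 1 ≤ d) (hn : 1 ≤ n)
    (lam : ℝ) (hlam : 0 < lam)
    (φ : ℕ → Fin d → ℝ)
    (hφ : ∀ t < n, Real.sqrt (φ t ⬝ᵥ φ t) ≤ 1)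
    (Shat : ℕ → Matrix (Fin d) (Fin d) ℝ)
    (hShat : ∀ t, Shat t = lam • (1 : Matrix (Fin d) (Fin d) ℝ)
        + ∑ s ∈ Finset.range t, vecMulVec (φ s) (φ s)) :
    Real.log (Shat n).det
        = d * Real.log lam
          + ∑ t ∈ Finset.range n, Real.log (1 + φ t ⬝ᵥ (Shat t)⁻¹ *ᵥ φ t) ∧
    Real.log (Shat n).det ≤ d * Real.log (lam + n / d) :=
  elliptical_potential_general d n hd lam hlam φ hφ Shat hShat
end

section
/- Let d, n ∈ ℕ with d ≥ 1, let λ > 0, let φ_1, …, φ_n ∈ ℝ^d, y_1, …, y_n ∈ ℝ, and w ∈ ℝ^d. Define Σ̂_t := λI_d + Σ_{s=1}^{t} φ_sφ_sᵀ for t = 0, …, n, Ŵ_t := Σ̂_t^{-1} Σ_{s=1}^{t} φ_s y_s (with Ŵ_0 = 0), Θ_t := (Ŵ_t − w)ᵀ Σ̂_t (Ŵ_t − w), and ε_t := y_t − φ_tᵀw. Then Θ_n ≤ λ‖w‖_2² + Σ_{t=1}^{n} [ 2 ε_t · φ_tᵀ(Ŵ_{t-1} − w) / (1 + φ_tᵀ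 Σ̂_{t-1}^{-1} φ_t) + ε_t² · φ_tᵀ Σ̂_{t-1}^{-1} φ_t / (1 + φ_tᵀ Σ̂_{t-1}^{-1} φ_t) ]. -/
open Matrix Finset

/-! If `(S + vvᵀ)Δ' = SΔ + e v` with `S` symmetric and invertible, then `Δ' - Δ` is the multiple
`(e - vᵀΔ') S⁻¹v`; solving this for `vᵀΔ'` turns the quadratic form into the exact identity
`Δ'ᵀ(S + vvᵀ)Δ' = ΔᵀSΔ + (2e vᵀΔ + e² vᵀS⁻¹v - (vᵀΔ)²) / (1 + vᵀS⁻¹v)`.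
In online ridge regression `Δ_t = Ŵ_t - w` obeys this recursion with `v = φ_t`, `e = ε_t`, so
dropping the term `-(vᵀΔ)²` and telescoping from `Θ_0 = λ‖w‖²` gives the bound. -/

section QuadraticFormUpdate

variable {ι : Type*} [Fintype ι] [DecidableEq ι]

theorem dotProduct_add_vecMulVec_mulVec_eq {K : Type*} [Field K] {S : Matrix ι ι K}
    (hS : S.IsSymm) (hdet : IsUnit S.det) {v Δ Δ' : ι → K} {e : K}
    (hden : 1 + v ⬝ᵥ S⁻¹ *ᵥ v ≠ 0) (h : (S + vecMulVec v v) *ᵥ Δ' = S *ᵥ Δ + e • v) :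
    Δ' ⬝ᵥ (S + vecMulVec v v) *ᵥ Δ' = Δ ⬝ᵥ S *ᵥ Δ
      + (2 * e * (v ⬝ᵥ Δ) + e ^ 2 * (v ⬝ᵥ S⁻¹ *ᵥ v) - (v ⬝ᵥ Δ) ^ 2)
        / (1 + v ⬝ᵥ S⁻¹ *ᵥ v) := by
  set a := v ⬝ᵥ S⁻¹ *ᵥ v
  set p := v ⬝ᵥ Δ
  set q := v ⬝ᵥ Δ'
  have hSz : S *ᵥ (Δ' - Δ) = (e - q) • v := by
    rw [add_mulVec, vecMulVec_mulVec, op_smul_eq_smul] at h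
    rw [mulVec_sub]
    linear_combination (norm := module) h
  have hz : Δ' - Δ = (e - q) • (S⁻¹ *ᵥ v) := by
    rw [← mulVec_smul, ← hSz, mulVec_mulVec, nonsing_inv_mul S hdet, one_mulVec]
  have hq : q * (1 + a) = p + e * a := by
    have : q = p + (e - q) * a := by
      rw [← smul_eq_mul, ← dotProduct_smul, ← hz, dotProduct_sub]; ring
    linear_combination this
  have hcross : (Δ' - Δ) ⬝ᵥ S *ᵥ Δ = (e - q) * p := by
    rw [dotProduct_mulVec, ← mulVec_transpose, hS.eq, ← dotProduct_comm, hSz, dotProduct_smul,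
      smul_eq_mul, dotProduct_comm]
  have hquad : Δ' ⬝ᵥ (S + vecMulVec v v) *ᵥ Δ' = Δ ⬝ᵥ S *ᵥ Δ + (e - q) * p + e * q := by
    rw [h, dotProduct_add, dotProduct_smul, smul_eq_mul, dotProduct_comm Δ' v, ← hcross,
      sub_dotProduct]
    ring
  rw [hquad, add_assoc, add_right_inj, eq_div_iff hden]
  linear_combination (e - p) * hq

theorem dotProduct_add_vecMulVec_mulVec_le {S : Matrix ι ι ℝ} (hS : S.PosDef)
    {v Δ Δ' : ι → ℝ} {e : ℝ} (h : (S + vecMulVec v v) *ᵥ Δ' = S *ᵥ Δ + e • v) :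
    Δ' ⬝ᵥ (S + vecMulVec v v) *ᵥ Δ' ≤ Δ ⬝ᵥ S *ᵥ Δ
      + (2 * e * (v ⬝ᵥ Δ) / (1 + v ⬝ᵥ S⁻¹ *ᵥ v)
        + e ^ 2 * (v ⬝ᵥ S⁻¹ *ᵥ v) / (1 + v ⬝ᵥ S⁻¹ *ᵥ v)) := by
  have ha : 0 ≤ v ⬝ᵥ S⁻¹ *ᵥ v := by
    simpa using hS.inv.posSemidef.dotProduct_mulVec_nonneg v
  have hden : 0 < 1 + v ⬝ᵥ S⁻¹ *ᵥ v := by linarith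
  have hSymm : S.IsSymm := by simpa using hS.isHermitian
  rw [dotProduct_add_vecMulVec_mulVec_eq hSymm (S.isUnit_iff_isUnit_det.mp hS.isUnit)
    hden.ne' h, ← add_div]
  gcongr
  exact sub_le_self _ (sq_nonneg _)

end QuadraticFormUpdate

namespace OnlineRidge

variable {ι : Type*} [DecidableEq ι] (lam : ℝ) (φ : ℕ → ι → ℝ) (y : ℕ → ℝ)

def gram (t : ℕ) : Matrix ι ι ℝ := lam • 1 + ∑ s ∈ range t, vecMulVec (φ s) (φ s)

theorem gram_succ (t : ℕ) : gram lam φ (t + 1) = gram lam φ t + vecMulVec (φ t) (φ t) := by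
  rw [gram, gram, sum_range_succ, add_assoc]

variable [Fintype ι]

noncomputable def estimate (t : ℕ) : ι → ℝ := (gram lam φ t)⁻¹ *ᵥ ∑ s ∈ range t, y s • φ s

variable {lam}

theorem posDef_gram (hlam : 0 < lam) (t : ℕ) : (gram lam φ t).PosDef :=
  (PosDef.one.smul hlam).add_posSemidef <| posSemidef_sum _ fun s _ => by
    simpa using posSemidef_vecMulVec_self_star (φ s)

theorem gram_mulVec_estimate (hlam : 0 < lam) (t : ℕ) :
    gram lam φ t *ᵥ estimate lam φ y t = ∑ s ∈ range t, y s • φ s := by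
  rw [estimate, mulVec_mulVec, mul_nonsing_inv _ ((gram lam φ t).isUnit_iff_isUnit_det.mp
    (posDef_gram φ hlam t).isUnit), one_mulVec]

theorem gram_succ_mulVec_estimate_sub (hlam : 0 < lam) (w : ι → ℝ) (t : ℕ) :
    (gram lam φ t + vecMulVec (φ t) (φ t)) *ᵥ (estimate lam φ y (t + 1) - w)
      = gram lam φ t *ᵥ (estimate lam φ y t - w) + (y t - φ t ⬝ᵥ w) • φ t := by
  rw [← gram_succ, mulVec_sub, mulVec_sub, gram_mulVec_estimate φ y hlam,
    gram_mulVec_estimate φ y hlam, sum_range_succ, gram_succ, add_mulVec, vecMulVec_mulVec,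
    op_smul_eq_smul]
  module

end OnlineRidge

theorem online_ridge_decomposition_general (d n : ℕ)
    (lam : ℝ) (hlam : 0 < lam)
    (φ : ℕ → Fin d → ℝ) (y : ℕ → ℝ) (w : Fin d → ℝ)
    (Shat : ℕ → Matrix (Fin d) (Fin d) ℝ)
    (hShat : ∀ t, Shat t = lam • (1 : Matrix (Fin d) (Fin d) ℝ)
        + ∑ s ∈ Finset.range t, vecMulVec (φ s) (φ s))
    (What : ℕ → Fin d → ℝ)
    (hWhat : ∀ t, What t = (Shat t)⁻¹ *ᵥ ∑ s ∈ Finset.range t, y s • φ s)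
    (Θ : ℕ → ℝ)
    (hΘ : ∀ t, Θ t = (What t - w) ⬝ᵥ Shat t *ᵥ (What t - w))
    (ε : ℕ → ℝ) (hε : ∀ t, ε t = y t - φ t ⬝ᵥ w) :
    Θ n ≤ lam * (w ⬝ᵥ w)
      + ∑ t ∈ Finset.range n,
          (2 * ε t * (φ t ⬝ᵥ (What t - w)) / (1 + φ t ⬝ᵥ (Shat t)⁻¹ *ᵥ φ t)
            + ε t ^ 2 * (φ t ⬝ᵥ (Shat t)⁻¹ *ᵥ φ t) / (1 + φ t ⬝ᵥ (Shat t)⁻¹ *ᵥ φ t)) := by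
  have hS : Shat = OnlineRidge.gram lam φ := funext hShat
  have hW : What = OnlineRidge.estimate lam φ y := funext fun t => by rw [hWhat, hS]; rfl
  have hΘ₀ : Θ 0 = lam * (w ⬝ᵥ w) := by
    simp [hΘ, hWhat, hShat, smul_mulVec, dotProduct_smul]
  have hstep : ∀ t ∈ range n, Θ (t + 1) - Θ t ≤
      2 * ε t * (φ t ⬝ᵥ (What t - w)) / (1 + φ t ⬝ᵥ (Shat t)⁻¹ *ᵥ φ t)
        + ε t ^ 2 * (φ t ⬝ᵥ (Shat t)⁻¹ *ᵥ φ t) / (1 + φ t ⬝ᵥ (Shat t)⁻¹ *ᵥ φ t) := fun t _ => by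
    rw [hΘ, hΘ, hε, hS, hW, OnlineRidge.gram_succ, sub_le_iff_le_add']
    exact dotProduct_add_vecMulVec_mulVec_le (OnlineRidge.posDef_gram φ hlam t)
      (OnlineRidge.gram_succ_mulVec_estimate_sub φ y hlam w t)
  linarith [sum_range_sub Θ n, sum_le_sum hstep]

/-- **Recursive error decomposition for online ridge regression.**
With `Σ̂_t = λI + Σ_{s<t} φ_s φ_sᵀ`, `Ŵ_t = Σ̂_t⁻¹ Σ_{s<t} y_s φ_s`,
`Θ_t = (Ŵ_t − w)ᵀ Σ̂_t (Ŵ_t − w)` and residuals `ε_t = y_t − φ_tᵀw`,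
the weighted squared error `Θ_n` is bounded by `λ‖w‖²` plus a martingale part and a
self-normalized shift part.  (Indices `t = 0, …, n−1` play the role of the paper's
`t = 1, …, n`, so `Σ̂_t`, `Ŵ_t` here stand for the paper's `Σ̂_{t-1}`, `Ŵ_{t-1}`.) -/
theorem online_ridge_decomposition (d n : ℕ) (hd : 1 ≤ d)
    (lam : ℝ) (hlam : 0 < lam)
    (φ : ℕ → Fin d → ℝ) (y : ℕ → ℝ) (w : Fin d → ℝ)
    (Shat : ℕ → Matrix (Fin d) (Fin d) ℝ)
    (hShat : ∀ t, Shat t = lam • (1 : Matrix (Fin d) (Fin d) ℝ)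
        + ∑ s ∈ Finset.range t, vecMulVec (φ s) (φ s))
    (What : ℕ → Fin d → ℝ)
    (hWhat : ∀ t, What t = (Shat t)⁻¹ *ᵥ ∑ s ∈ Finset.range t, y s • φ s)
    (Θ : ℕ → ℝ)
    (hΘ : ∀ t, Θ t = (What t - w) ⬝ᵥ Shat t *ᵥ (What t - w))
    (ε : ℕ → ℝ) (hε : ∀ t, ε t = y t - φ t ⬝ᵥ w) :
    Θ n ≤ lam * (w ⬝ᵥ w)
      + ∑ t ∈ Finset.range n,
          (2 * ε t * (φ t ⬝ᵥ (What t - w)) / (1 + φ t ⬝ᵥ (Shat t)⁻¹ *ᵥ φ t)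
            + ε t ^ 2 * (φ t ⬝ᵥ (Shat t)⁻¹ *ᵥ φ t) / (1 + φ t ⬝ᵥ (Shat t)⁻¹ *ᵥ φ t)) :=
  online_ridge_decomposition_general d n lam hlam φ y w Shat hShat What hWhat Θ hΘ ε hε
end
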